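/- arXiv:2509.08473 — 5 statements merged into one kernel-verified Lean document; each statement's English description precedes it below -/
import Mathlib

section
/- Let K be a field, 𝔐 ⊆ 𝔑 an extension of multiplicatively written linearly ordered abelian groups, 𝕊 = K⟦𝔐⟧ ⊆ 𝕋 = K⟦𝔑⟧, and 𝔖 a final segment of (𝔐,≺). Let I ⊆ 𝔐·X^ℕ be a subset that is partially well-ordered for the reverse order ≻_𝔖, and let δ ∈ 𝕋 with δ ≺ u for every u ∈ 𝔖. Then the family (m·δ^k)_{mX^k ∈ I} is summable in 𝕋. -/
open HahnSeries
open scoped Classical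

noncomputable section

namespace Art

/-! ### Summability and dominance for Hahn series.

Monomial groups are written additively as exponent groups; the paper's ordering `≺` of
monomials is the *reverse* of the ordering of exponents, so that the dominant monomial of a
series corresponds to the *minimum* of its (partially well-ordered) support, and the paper's
"well-based" sets of monomials are exactly the `Set.IsPWO` sets of exponents. -/

section Basic

variable {Γ : Type} [PartialOrder Γ] {K : Type} [AddCommMonoid K]

/-- A family of Hahn series is summable: the union of supports is well-based (partially
well-ordered for the exponent order, i.e. Noetherian for the reverse monomial order) and each
monomial lies in the support of only finitely many members. -/
def SummableF {ι : Type} (s : ι → HahnSeries Γ K) : Prop :=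
  (⋃ i, (s i).support).IsPWO ∧ ∀ g : Γ, {i | (s i).coeff g ≠ 0}.Finite

/-- The sum of a summable family (junk value `0` if the family is not summable). -/
def hsum {ι : Type} (s : ι → HahnSeries Γ K) : HahnSeries Γ K :=
  if h : SummableF s then (HahnSeries.SummableFamily.mk s h.1 h.2).hsum else 0

/-- `dLE s t` is the dominance relation `s ≼ t`: every monomial of `s` is `≼` some monomial
of `t` (in exponents: `∀ g ∈ supp s, ∃ h ∈ supp t, h ≤ g`). -/
def dLE (s t : HahnSeries Γ K) : Prop := ∀ g ∈ s.support, ∃ h ∈ t.support, h ≤ g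

/-- `dLT s t` is the strict dominance relation `s ≺ t`. -/
def dLT (s t : HahnSeries Γ K) : Prop := t ≠ 0 ∧ ∀ g ∈ s.support, ∃ h ∈ t.support, h < g

/-- `dEq s t` is the asymptotic equivalence `s ≍ t`. -/
def dEq (s t : HahnSeries Γ K) : Prop := dLE s t ∧ dLE t s

/-- `t` is a truncation of `s`: `t` is the restriction of `s` to an initial segment of the
monomial ordering containing the dominant monomials, i.e. a downward closed set of exponents. -/
def IsTrunc (t s : HahnSeries Γ K) : Prop :=
  ∃ J : Set Γ, (∀ ⦃g h : Γ⦄, g ∈ J → h ≤ g → h ∈ J) ∧ ∀ g, t.coeff g = J.indicator s.coeff g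

end Basic

section Mono

variable {Γ : Type} [PartialOrder Γ]

/-- The monomial with exponent `g`, as a Hahn series. -/
def mono (K : Type) [Zero K] [One K] (g : Γ) : HahnSeries Γ K := HahnSeries.single g 1

end Mono

section SL

variable {Γ Γ' : Type} [PartialOrder Γ] [PartialOrder Γ'] {K : Type} [Semiring K]

/-- A map between fields/algebras of Hahn series over `K` is strongly linear if it is
`K`-linear and carries summable families to summable families, commuting with infinite sums. -/
def StronglyLinear (Φ : HahnSeries Γ K → HahnSeries Γ' K) : Prop :=
  (∀ a b, Φ (a + b) = Φ a + Φ b) ∧ (∀ (c : K) (a), Φ (c • a) = c • Φ a) ∧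
    ∀ (ι : Type) (s : ι → HahnSeries Γ K), SummableF s →
      SummableF (fun i => Φ (s i)) ∧ Φ (hsum s) = hsum (fun i => Φ (s i))

end SL

section Ordered

variable {Γ : Type} [AddCommGroup Γ] [LinearOrder Γ] [IsOrderedAddMonoid Γ] {K : Type} [Field K] [LinearOrder K] [IsStrictOrderedRing K]

/-- The order relation on the ordered field of Hahn series: `0 < s` iff the leading
coefficient (the coefficient of the dominant monomial) is positive. -/
def sLT (s t : HahnSeries Γ K) : Prop := 0 < (t - s).leadingCoeff

def sLE (s t : HahnSeries Γ K) : Prop := s = t ∨ sLT s t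

end Ordered

section Der

variable {Γ : Type} [AddCommGroup Γ] [LinearOrder Γ] [IsOrderedAddMonoid Γ] {K : Type} [Field K]

/-- `m† = m'/m`, in exponent form: the logarithmic derivative of the monomial `g`. -/
def dag (D : HahnSeries Γ K → HahnSeries Γ K) (g : Γ) : HahnSeries Γ K :=
  D (mono K g) * (mono K g)⁻¹

/-- Condition (⋆) with respect to `x`: for every monomial `m`, either `m† ≼ x⁻¹` and every
`n ∈ supp m'` has `n† ≼ x⁻¹`, or `m† ≻ x⁻¹` and every `n ∈ supp m'` has `n† ≍ m†`. -/
def SpecCond (D : HahnSeries Γ K → HahnSeries Γ K) (x : HahnSeries Γ K) : Prop :=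
  ∀ g : Γ,
    (dLE (dag D g) x⁻¹ ∧ ∀ h ∈ (D (mono K g)).support, dLE (dag D h) x⁻¹) ∨
    (dLT x⁻¹ (dag D g) ∧ ∀ h ∈ (D (mono K g)).support, dEq (dag D h) (dag D g))

end Der

/-- A differential pre-logarithmic Hahn field structure on `K⟦Γ⟧`: a strongly linear
derivation `D` together with a pre-logarithm `ℓ`, an embedding of the ordered group of
monomials into `(K⟦Γ⟧, +, 0, <)` (the monomial order being the reverse exponent order),
whose image is closed under truncation, and such that `D (ℓ m) = m† = m'/m`. -/
structure PreLogField (Γ K : Type) [AddCommGroup Γ] [LinearOrder Γ] [IsOrderedAddMonoid Γ] [Field K] [LinearOrder K] [IsStrictOrderedRing K] where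
  D : HahnSeries Γ K → HahnSeries Γ K
  ℓ : Γ → HahnSeries Γ K
  D_sl : StronglyLinear D
  D_leibniz : ∀ a b, D (a * b) = D a * b + a * D b
  ℓ_add : ∀ g h : Γ, ℓ (g + h) = ℓ g + ℓ h
  ℓ_mono : ∀ g h : Γ, g < h → sLT (ℓ h) (ℓ g)
  ℓ_trunc : ∀ (g : Γ) (t : HahnSeries Γ K), IsTrunc t (ℓ g) → ∃ h : Γ, t = ℓ h
  ℓ_dag : ∀ g : Γ, D (ℓ g) = dag D g


section Taylor

variable {Γ Γ' : Type} [AddCommGroup Γ] [LinearOrder Γ] [IsOrderedAddMonoid Γ] [AddCommGroup Γ'] [LinearOrder Γ'] [IsOrderedAddMonoid Γ']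
  {K : Type} [Field K]

/-- The convergence locus `Conv_△(P)` of a power series with coefficients `P k ∈ 𝕊`,
relative to a strongly linear map `△ : 𝕊 → 𝕋`. -/
def ConvD (Δ : HahnSeries Γ K → HahnSeries Γ' K) (P : ℕ → HahnSeries Γ K) :
    Set (HahnSeries Γ' K) :=
  {ε | SummableF fun k : ℕ => Δ (P k) * ε ^ k}

/-- The coefficients `f^{(k)}/k!` of the Taylor series of `f`. -/
def taylorCoeffs (D : HahnSeries Γ K → HahnSeries Γ K) (f : HahnSeries Γ K) :
    ℕ → HahnSeries Γ K :=
  fun k => (k.factorial : K)⁻¹ • D^[k] f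

/-- The set of monomials `𝔐_{△,δ} = {m : △(m†)·δ ≺ 1}` (in exponent form). -/
def Mdag (D : HahnSeries Γ K → HahnSeries Γ K) (Δ : HahnSeries Γ K → HahnSeries Γ' K)
    (δ : HahnSeries Γ' K) : Set Γ :=
  {g | dLT (Δ (dag D g) * δ) 1}

/-- The Taylor deformation `T_δ(△) : s ↦ Σ_k (△(s^{(k)})/k!)·δ^k`. -/
def Tdef (D : HahnSeries Γ K → HahnSeries Γ K) (Δ : HahnSeries Γ K → HahnSeries Γ' K)
    (δ : HahnSeries Γ' K) (s : HahnSeries Γ K) : HahnSeries Γ' K :=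
  hsum fun k : ℕ => (k.factorial : K)⁻¹ • (Δ (D^[k] s) * δ ^ k)

end Taylor
section Cut

variable {Γ : Type} [AddCommGroup Γ] [LinearOrder Γ] [IsOrderedAddMonoid Γ] {K : Type} [Field K]



/-- `S` is a final segment of the monomial ordering `≺`, i.e. a downward closed set of
exponents. -/
def FinalSeg (S : Set Γ) : Prop := ∀ ⦃u v : Γ⦄, u ∈ S → v ≤ u → v ∈ S

/-- The order `mX^k ≺_𝔖 nX^{k'}` on the monoid `𝔐·X^ℕ`, in exponent form on `Γ × ℕ`:
either `k = k'` and `m ≺ n` (i.e. the exponent of `n` is less than that of `m`), or `k > k'`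
and `m·n⁻¹ ≼ u^{-(k-k')}` for some `u ∈ S`. -/
def cutLT (S : Set Γ) (p q : Γ × ℕ) : Prop :=
  (p.2 = q.2 ∧ q.1 < p.1) ∨
    (q.2 < p.2 ∧ ∃ u ∈ S, ((q.2 : ℤ) - (p.2 : ℤ)) • u ≤ p.1 - q.1)

/-- A subset of `𝔐·X^ℕ` is well-based (Noetherian for the reverse order `≻_𝔖`): every
sequence in it admits `i < j` with the `j`-th term `≼_𝔖` the `i`-th term. -/
def CutWB (S : Set Γ) (A : Set (Γ × ℕ)) : Prop :=
  ∀ f : ℕ → Γ × ℕ, (∀ n, f n ∈ A) → ∃ i j : ℕ, i < j ∧ (f j = f i ∨ cutLT S (f j) (f i))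

/-- The strictly positive cone `(𝔐×X^ℤ)^{≺,𝔖}` on `𝔐·X^ℤ`, in exponent form on `Γ × ℤ`:
`{mX^0 : m ≺ 1} ∪ {mX^k : k > 0 ∧ ∃ u ∈ 𝔖, m ≼ u^{-k}}`. -/
def cutCone (S : Set Γ) : Set (Γ × ℤ) :=
  {p | (p.2 = 0 ∧ 0 < p.1) ∨ (0 < p.2 ∧ ∃ u ∈ S, (-p.2) • u ≤ p.1)}

/-- A power series with Hahn-series coefficients `P k` belongs to the cut algebra
`𝕊⟦X⟧_𝔖` iff its total support is partially well-ordered for `≻_𝔖`. -/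
def InCut (S : Set Γ) (P : ℕ → HahnSeries Γ K) : Prop :=
  CutWB S {q : Γ × ℕ | q.1 ∈ (P q.2).support}

/-- An element of a cut algebra `K⟦𝔐 ×_𝔖 X^ℕ⟧`, presented as a coefficient function
`Γ × ℕ → K`, with monomials constrained to a subset `G ⊆ Γ`. -/
def InCutAlg (S G : Set Γ) (P : Γ × ℕ → K) : Prop :=
  CutWB S (Function.support P) ∧ ∀ q ∈ Function.support P, Prod.fst q ∈ G

/-- Summability of a family of elements of a cut algebra. -/
def CutSummable {ι : Type} (S : Set Γ) (F : ι → Γ × ℕ → K) : Prop :=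
  CutWB S (⋃ i, Function.support (F i)) ∧ ∀ q : Γ × ℕ, {i | F i q ≠ 0}.Finite

/-- The coefficientwise sum of a family of elements of a cut algebra. -/
def cutSum {ι : Type} (F : ι → Γ × ℕ → K) : Γ × ℕ → K := fun q => ∑ᶠ i, F i q

/-- The Cauchy convolution product on coefficient functions `Γ × ℕ → K`. -/
def cutConv (P Q : Γ × ℕ → K) : Γ × ℕ → K :=
  fun q => ∑ᶠ (p : (Γ × ℕ) × (Γ × ℕ)) (_ : p.1 + p.2 = q), P p.1 * Q p.2

/-- The subgroup `𝔖^{-‡} = {m : m = 1 ∨ 𝔡_{m†} ∈ 𝔖⁻¹}` of `𝔐`. -/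
def SdagInv (D : HahnSeries Γ K → HahnSeries Γ K) (S : Set Γ) : Set Γ :=
  {g | g = 0 ∨ (dag D g ≠ 0 ∧ -(dag D g).order ∈ S)}

/-- The operator `X·∂̄` on cut series: `mX^k ↦ m'·X^{k+1}`, extended coefficientwise. -/
def XDbar (D : HahnSeries Γ K → HahnSeries Γ K) (P : Γ × ℕ → K) : Γ × ℕ → K := fun q =>
  match q.2 with
  | 0 => 0
  | Nat.succ k => ∑ᶠ g : Γ, P (g, k) * (D (mono K g)).coeff q.1

/-- The Taylor map `s ↦ Σ_k (s^{(k)}/k!)·X^k` with values in cut series. -/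
def TaylorCut (D : HahnSeries Γ K → HahnSeries Γ K) (s : HahnSeries Γ K) : Γ × ℕ → K :=
  fun q => (q.2.factorial : K)⁻¹ * (D^[q.2] s).coeff q.1

end Cut

section PS

variable {Γ : Type} [AddCommGroup Γ] [LinearOrder Γ] [IsOrderedAddMonoid Γ] {K : Type} [Field K]

/-- The convergence locus of a power series with coefficients `P k` in `𝕊`. -/
def Conv (P : ℕ → HahnSeries Γ K) : Set (HahnSeries Γ K) :=
  {δ | SummableF fun k => P k * δ ^ k}

/-- Evaluation `P̃(δ)` of a power series at `δ` (junk value if not convergent). -/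
def evalPS (P : ℕ → HahnSeries Γ K) (δ : HahnSeries Γ K) : HahnSeries Γ K :=
  hsum fun k => P k * δ ^ k

/-- The formal derivative of a power series, `P' = Σ (k+1)·P_{k+1} X^k`. -/
def derivPS (P : ℕ → HahnSeries Γ K) : ℕ → HahnSeries Γ K :=
  fun k => ((k : K) + 1) • P (k + 1)

/-- Formal composition `P ∘ Q` of power series (for `Q` with zero constant term). -/
def compPS (P Q : ℕ → HahnSeries Γ K) : ℕ → HahnSeries Γ K :=
  fun k => ∑ n ∈ Finset.range (k + 1),
    P n * (PowerSeries.coeff (R := HahnSeries Γ K) k) ((PowerSeries.mk Q) ^ n)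

end PS


section AuxL
variable {Γ' : Type} [AddCommGroup Γ'] [LinearOrder Γ'] [IsOrderedAddMonoid Γ']
private lemma aux_length_le {L L' : List Γ'} (h : List.SublistForall₂ (· ≤ ·) L L') :
    L.length ≤ L'.length := by
  induction h with
  | nil => simp
  | cons _ _ ih => simpa using Nat.succ_le_succ ih
  | cons_right _ ih => exact ih.trans (Nat.le_succ _)
private lemma aux_sum_lower {c : Γ'} {L : List Γ'} (h : ∀ a ∈ L, c ≤ a) :
    L.length • c ≤ L.sum := by
  induction L with
  | nil => simp
  | cons a t ih =>
    rw [List.sum_cons, List.length_cons, succ_nsmul]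
    have h1 := ih fun b hb => h b (List.mem_cons_of_mem _ hb)
    have h2 := h a (List.mem_cons_self)
    calc t.length • c + c ≤ t.sum + a := add_le_add h1 h2
      _ = a + t.sum := add_comm _ _
private lemma aux_sub_sum_eq {L L' : List Γ'} (h : List.SublistForall₂ (· ≤ ·) L L')
    (hlen : L'.length ≤ L.length) : L.sum ≤ L'.sum := by
  induction h with
  | nil => simp_all
  | cons hab _ ih =>
    simp only [List.sum_cons, List.length_cons] at *
    exact add_le_add hab (ih (Nat.succ_le_succ_iff.mp hlen))
  | @cons_right a L₁ L₂ h ih =>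
    have := aux_length_le h
    simp only [List.length_cons] at hlen
    omega
private lemma aux_sub_sum {c : Γ'} {L L' : List Γ'}
    (h : List.SublistForall₂ (· ≤ ·) L L') (hc : ∀ a ∈ L', c < a) :
    L.sum + (L'.length - L.length) • c ≤ L'.sum ∧
      (L.length < L'.length → L.sum + (L'.length - L.length) • c < L'.sum) := by
  induction h with
  | @nil l =>
    simp only [List.sum_nil, List.length_nil, Nat.sub_zero, zero_add]
    constructor
    · exact aux_sum_lower fun a ha => (hc a ha).le
    · intro hl
      obtain ⟨a, t, rfl⟩ : ∃ a t, l = a :: t := by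
        cases l with
        | nil => simp at hl
        | cons a t => exact ⟨a, t, rfl⟩
      rw [List.sum_cons, List.length_cons, succ_nsmul]
      have h1 := aux_sum_lower fun b hb => (hc b (List.mem_cons_of_mem _ hb)).le
      have h2 := hc a (List.mem_cons_self)
      calc t.length • c + c < t.sum + a := add_lt_add_of_le_of_lt h1 h2
        _ = a + t.sum := add_comm _ _
  | @cons a b L₁ L₂ hab h ih =>
    have ih' := ih fun x hx => hc x (List.mem_cons_of_mem _ hx)
    simp only [List.sum_cons, List.length_cons, Nat.succ_sub_succ]
    constructor
    · calc a + L₁.sum + (L₂.length - L₁.length) • c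
          = a + (L₁.sum + (L₂.length - L₁.length) • c) := by abel
        _ ≤ b + L₂.sum := add_le_add hab ih'.1
    · intro hl
      have hl' : L₁.length < L₂.length := Nat.succ_lt_succ_iff.mp hl
      calc a + L₁.sum + (L₂.length - L₁.length) • c
          = a + (L₁.sum + (L₂.length - L₁.length) • c) := by abel
        _ < b + L₂.sum := add_lt_add_of_le_of_lt hab (ih'.2 hl')
  | @cons_right a L₁ L₂ h ih =>
    have ih' := ih fun x hx => hc x (List.mem_cons_of_mem _ hx)
    have hlen := aux_length_le h
    have hca := hc a (List.mem_cons_self)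
    have hkey : L₁.sum + ((a :: L₂).length - L₁.length) • c < a + L₂.sum := by
      have hsub : (a :: L₂).length - L₁.length = (L₂.length - L₁.length) + 1 := by
        simp only [List.length_cons]; omega
      rw [hsub, succ_nsmul, ← add_assoc]
      calc L₁.sum + (L₂.length - L₁.length) • c + c ≤ L₂.sum + c := add_le_add ih'.1 le_rfl
        _ < L₂.sum + a := add_lt_add_of_le_of_lt le_rfl hca
        _ = a + L₂.sum := add_comm _ _
    exact ⟨hkey.le, fun _ => hkey⟩
end AuxL

private lemma zsmul_antitone {Γ : Type} [AddCommGroup Γ] [LinearOrder Γ] [IsOrderedAddMonoid Γ] {n : ℤ} (hn : n ≤ 0)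
    {a b : Γ} (h : a ≤ b) : n • b ≤ n • a := by
  have h2 : (-n) • a ≤ (-n) • b := zsmul_le_zsmul_right (neg_nonneg.mpr hn) h
  rw [neg_zsmul, neg_zsmul, neg_le_neg_iff] at h2
  exact h2

private lemma cutLT_trans {Γ : Type} [AddCommGroup Γ] [LinearOrder Γ] [IsOrderedAddMonoid Γ] {S : Set Γ}
    {p q r : Γ × ℕ} (hpq : cutLT S p q) (hqr : cutLT S q r) :
    cutLT S p r := by
  rcases hpq with ⟨h1, h2⟩ | ⟨h1, u, hu, h2⟩ <;> rcases hqr with ⟨h3, h4⟩ | ⟨h3, v, hv, h4⟩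
  · exact Or.inl ⟨h1.trans h3, h4.trans h2⟩
  · refine Or.inr ⟨h3.trans_eq h1.symm, v, hv, ?_⟩
    rw [h1]
    exact h4.trans (sub_le_sub_right h2.le _)
  · refine Or.inr ⟨h3 ▸ h1, u, hu, ?_⟩
    rw [← h3]
    exact h2.trans (sub_le_sub_left h4.le _)
  · refine Or.inr ⟨h3.trans h1, max u v, ?_, ?_⟩
    · rcases max_cases u v with ⟨h, _⟩ | ⟨h, _⟩ <;> rw [h] <;> assumption
    · have e : ((r.2 : ℤ) - (p.2 : ℤ)) • (max u v)
          = ((q.2 : ℤ) - (p.2 : ℤ)) • (max u v) + ((r.2 : ℤ) - (q.2 : ℤ)) • (max u v) := by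
        rw [← add_zsmul]; ring_nf
      have b1 : ((q.2 : ℤ) - (p.2 : ℤ)) • (max u v) ≤ ((q.2 : ℤ) - (p.2 : ℤ)) • u :=
        zsmul_antitone (by omega) (le_max_left u v)
      have b2 : ((r.2 : ℤ) - (q.2 : ℤ)) • (max u v) ≤ ((r.2 : ℤ) - (q.2 : ℤ)) • v :=
        zsmul_antitone (by omega) (le_max_right u v)
      calc ((r.2 : ℤ) - (p.2 : ℤ)) • (max u v)
          ≤ ((q.2 : ℤ) - (p.2 : ℤ)) • u + ((r.2 : ℤ) - (q.2 : ℤ)) • v := by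
            rw [e]; exact add_le_add b1 b2
        _ ≤ (p.1 - q.1) + (q.1 - r.1) := add_le_add h2 h4
        _ = p.1 - r.1 := by abel

private lemma exists_list {Γ' K : Type} [AddCommGroup Γ'] [LinearOrder Γ'] [IsOrderedAddMonoid Γ'] [Field K]
    (δ : HahnSeries Γ' K) : ∀ (k : ℕ) (g : Γ'), g ∈ (δ ^ k).support →
      ∃ L : List Γ', L.length = k ∧ (∀ a ∈ L, a ∈ δ.support) ∧ L.sum = g := by
  intro k
  induction k with
  | zero =>
    intro g hg
    rw [pow_zero, HahnSeries.support_one] at hg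
    exact ⟨[], rfl, by simp, by simpa using hg.symm⟩
  | succ k ih =>
    intro g hg
    rw [pow_succ] at hg
    obtain ⟨a, ha, b, hb, hab⟩ := Set.mem_add.mp (HahnSeries.support_mul_subset hg)
    obtain ⟨L, hL1, hL2, hL3⟩ := ih a ha
    refine ⟨L ++ [b], by simp [hL1], ?_, by simp [hL3, hab]⟩
    intro x hx
    rcases List.mem_append.mp hx with h | h
    · exact hL2 x h
    · simpa using List.mem_singleton.mp h ▸ hb

private lemma key {Γ Γ' K : Type} [AddCommGroup Γ] [LinearOrder Γ] [IsOrderedAddMonoid Γ]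
    [AddCommGroup Γ'] [LinearOrder Γ'] [IsOrderedAddMonoid Γ'] [Field K]
    (φ : Γ →+ Γ') (hφ : StrictMono φ)
    (S : Set Γ)
    (I : Set (Γ × ℕ)) (hI : CutWB S I)
    (δ : HahnSeries Γ' K) (hδ : ∀ u ∈ S, dLT δ (mono K (φ u)))
    (p : ℕ → Γ × ℕ) (hp : ∀ n, p n ∈ I)
    (g : ℕ → Γ')
    (hg : ∀ n, g n ∈ ((mono K (φ (p n).1) : HahnSeries Γ' K) * δ ^ (p n).2).support) :
    ∃ i j, i < j ∧ ((p j = p i ∧ g i ≤ g j) ∨ g i < g j) := by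
  -- every element of supp δ dominates every φ u, u ∈ S
  have hdom : ∀ a ∈ δ.support, ∀ u ∈ S, φ u < a := by
    intro a ha u hu
    obtain ⟨-, h2⟩ := hδ u hu
    obtain ⟨h, hh, hlt⟩ := h2 a ha
    have : h = φ u := Set.mem_singleton_iff.mp (HahnSeries.support_single_subset hh)
    exact this ▸ hlt
  -- decompose each g n
  have hdec : ∀ n, ∃ L : List Γ', L.length = (p n).2 ∧ (∀ a ∈ L, a ∈ δ.support) ∧
      φ (p n).1 + L.sum = g n := by
    intro n
    obtain ⟨a, ha, b, hb, hab⟩ :=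
      Set.mem_add.mp (HahnSeries.support_mul_subset (hg n))
    have ha' : a = φ (p n).1 :=
      Set.mem_singleton_iff.mp (HahnSeries.support_single_subset ha)
    obtain ⟨L, hL1, hL2, hL3⟩ := exists_list δ _ b hb
    exact ⟨L, hL1, hL2, by rw [hL3, ← ha', hab]⟩
  choose L hlen helem hLsum using hdec
  -- Ramsey extraction along the cut relation
  set r : Γ × ℕ → Γ × ℕ → Prop := fun a b => b = a ∨ cutLT S b a with hr_def
  haveI : IsRefl (Γ × ℕ) r := ⟨fun a => Or.inl rfl⟩
  haveI : IsTrans (Γ × ℕ) r := ⟨by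
    rintro a b c (rfl | hba) (h | hcb)
    · exact Or.inl h
    · exact Or.inr hcb
    · exact Or.inr (h ▸ hba)
    · exact Or.inr (cutLT_trans hcb hba)⟩
  haveI : IsPreorder (Γ × ℕ) r := { refl := refl_of r, trans := fun _ _ _ => trans_of r }
  have hI' : I.PartiallyWellOrderedOn r := Set.partiallyWellOrderedOn_iff_exists_lt.mpr hI
  obtain ⟨σ, hσ⟩ := hI'.exists_monotone_subseq hp
  -- Higman on the lists of δ-monomials
  have hH := Set.PartiallyWellOrderedOn.partiallyWellOrderedOn_sublistForall₂
    ((· ≤ ·) : Γ' → Γ' → Prop) δ.isPWO_support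
  obtain ⟨i, j, hij, hsub⟩ := hH.exists_lt (f := fun n => L (σ n)) (fun n x hx => helem (σ n) x hx)
  refine ⟨σ i, σ j, σ.strictMono hij, ?_⟩
  have hrel : r (p (σ i)) (p (σ j)) := hσ i j hij.le
  rcases hrel with heq | hcut
  · -- identical indices
    left
    refine ⟨heq, ?_⟩
    rw [← hLsum (σ i), ← hLsum (σ j), heq]
    refine add_le_add_right (aux_sub_sum_eq hsub ?_) _
    rw [hlen (σ i), hlen (σ j), heq]
  · rcases hcut with ⟨hk, hm⟩ | ⟨hk, u, hu, hle⟩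
    · -- same power of X, strictly larger monomial exponent
      right
      rw [← hLsum (σ i), ← hLsum (σ j)]
      refine add_lt_add_of_lt_of_le (hφ hm) (aux_sub_sum_eq hsub ?_)
      rw [hlen (σ i), hlen (σ j), hk]
    · -- higher power of X
      right
      have hc : ∀ a ∈ L (σ j), φ u < a := fun a ha => hdom a (helem (σ j) a ha) u hu
      have h2 := (aux_sub_sum hsub hc).2
        (by rw [hlen (σ i), hlen (σ j)]; exact hk)
      rw [hlen (σ i), hlen (σ j)] at h2
      set z : Γ' := (((p (σ j)).2 : ℤ) - ((p (σ i)).2 : ℤ)) • φ u with hz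
      have hcast : ((p (σ j)).2 - (p (σ i)).2) • φ u = z := by
        rw [hz, ← natCast_zsmul, Nat.cast_sub hk.le]
      rw [hcast] at h2
      -- h2 : (L (σ i)).sum + z < (L (σ j)).sum
      have hA : φ (p (σ i)).1 ≤ φ (p (σ j)).1 + z := by
        have := hφ.monotone hle
        rw [map_zsmul, map_sub] at this
        have hneg : (((p (σ i)).2 : ℤ) - ((p (σ j)).2 : ℤ)) • φ u = -z := by
          rw [hz, ← neg_zsmul]; ring_nf
        rw [hneg, neg_le_sub_iff_le_add] at this
        exact this
      rw [← hLsum (σ i), ← hLsum (σ j)]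
      calc φ (p (σ i)).1 + (L (σ i)).sum ≤ (φ (p (σ j)).1 + z) + (L (σ i)).sum :=
            add_le_add hA le_rfl
        _ = φ (p (σ j)).1 + ((L (σ i)).sum + z) := by abel
        _ < φ (p (σ j)).1 + (L (σ j)).sum := add_lt_add_of_le_of_lt le_rfl h2


/-- **Proposition 3.5 (evaluation on cut-Noetherian sets).** For an extension `𝔐 ⊆ 𝔑` of
linearly ordered abelian groups, a final segment `𝔖` of `(𝔐,≺)`, a subset `I ⊆ 𝔐·X^ℕ`
partially well-ordered for `≻_𝔖`, and `δ ∈ 𝕋 = K⟦𝔑⟧` with `δ ≺ u` for every `u ∈ 𝔖`, the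
family `(m·δ^k)_{mX^k ∈ I}` is summable in `𝕋`. -/
theorem statement14 {Γ Γ' K : Type} [AddCommGroup Γ] [LinearOrder Γ] [IsOrderedAddMonoid Γ]
    [AddCommGroup Γ'] [LinearOrder Γ'] [IsOrderedAddMonoid Γ'] [Field K]
    (φ : Γ →+ Γ') (hφ : StrictMono φ)
    (S : Set Γ) (hS : FinalSeg S)
    (I : Set (Γ × ℕ)) (hI : CutWB S I)
    (δ : HahnSeries Γ' K) (hδ : ∀ u ∈ S, dLT δ (mono K (φ u))) :
    SummableF (fun p : I =>
      (mono K (φ (p : Γ × ℕ).1) : HahnSeries Γ' K) * δ ^ (p : Γ × ℕ).2) := by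
  constructor
  · refine Set.partiallyWellOrderedOn_iff_exists_lt.mpr ?_
    intro f hf
    choose q hq using fun n => Set.mem_iUnion.mp (hf n)
    obtain ⟨i, j, hij, h⟩ := key φ hφ S I hI δ hδ
      (fun n => (q n : Γ × ℕ)) (fun n => (q n).2) f hq
    refine ⟨i, j, hij, ?_⟩
    rcases h with ⟨-, h⟩ | h
    exacts [h, h.le]
  · intro γ
    by_contra hfin
    have hinf : {i : I | ((mono K (φ (i : Γ × ℕ).1) : HahnSeries Γ' K)
        * δ ^ (i : Γ × ℕ).2).coeff γ ≠ 0}.Infinite := hfin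
    set e := hinf.natEmbedding with he
    obtain ⟨i, j, hij, h⟩ := key φ hφ S I hI δ hδ
      (fun n => ((e n : I) : Γ × ℕ)) (fun n => ((e n : I)).2)
      (fun _ => γ) (fun n => (e n).2)
    rcases h with ⟨heq, -⟩ | h
    · have : e j = e i := Subtype.ext (Subtype.ext heq)
      exact absurd (e.injective this) hij.ne'
    · exact lt_irrefl γ h
end Art
end
end

section
/- Let K be a field and let 𝔐 ⊆ 𝔑 be an extension of multiplicatively written linearly ordered abelian groups with 𝔐 divisible; set 𝕊 = K⟦𝔐⟧ ⊆ 𝕋 = K⟦𝔑⟧. Let P = Σ_{k∈ℕ} (Σ_{m∈𝔐} P_{k,m}·m)·X^k ∈ 𝕊⟦X⟧ and let δ ∈ 𝕋∖{0}. Then P lies in the cut algebra 𝕊⟦X⟧_{𝔖_δ}, where 𝔖_δ := {m ∈ 𝔐 : m ≻ δ}, if and only if the family (P_{k,m}·m·δ^k), indexed by the pairs mX^k with m ∈ supp P_k, is summable in 𝕋. -/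
open HahnSeries
open scoped Classical

noncomputable section

namespace Art

section Prop36Aux

variable {Γ Γ' : Type} [AddCommGroup Γ] [LinearOrder Γ] [IsOrderedAddMonoid Γ] [AddCommGroup Γ'] [LinearOrder Γ'] [IsOrderedAddMonoid Γ']
  {K : Type} [Field K]

private lemma nsmul_lt_nsmul_of_lt' {a b : Γ'} {n : ℕ} (hn : n ≠ 0) (h : a < b) :
    n • a < n • b := by
  have h1 : 0 < n • (b - a) := nsmul_pos (sub_pos.2 h) hn
  have h2 : n • b = n • a + n • (b - a) := by
    rw [← smul_add]; congr 1; abel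
  rw [h2]; exact lt_add_of_pos_right _ h1

private lemma nsmul_lt_nsmul_iff'' {a b : Γ'} {n : ℕ} (hn : n ≠ 0) :
    n • a < n • b ↔ a < b := by
  refine ⟨fun h => ?_, nsmul_lt_nsmul_of_lt' hn⟩
  by_contra hba
  rcases eq_or_lt_of_le (not_lt.1 hba) with heq | hba'
  · rw [heq] at h; exact lt_irrefl _ h
  · exact absurd (nsmul_lt_nsmul_of_lt' hn hba') (not_lt.2 h.le)

private lemma sub_nsmul'' (a : Γ') {m n : ℕ} (h : n ≤ m) :
    (m - n) • a = m • a - n • a :=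
  eq_sub_of_add_eq (by rw [← add_nsmul, Nat.sub_add_cancel h])

private lemma mem_Sdelta_iff (φ : Γ →+ Γ') {δ : HahnSeries Γ' K} (hδ : δ ≠ 0) (g : Γ) :
    dLT δ (mono K (φ g)) ↔ φ g < δ.order := by
  constructor
  · rintro ⟨-, h⟩
    obtain ⟨h', hh', hlt⟩ := h δ.order ((δ.mem_support _).2 (coeff_order_eq_zero.not.2 hδ))
    simp only [mono, support_single_of_ne (one_ne_zero : (1:K) ≠ 0),
      Set.mem_singleton_iff] at hh'
    rwa [hh'] at hlt
  · intro hlt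
    refine ⟨single_ne_zero one_ne_zero, fun x hx => ⟨φ g, ?_, ?_⟩⟩
    · simp only [mono, support_single_of_ne (one_ne_zero : (1:K) ≠ 0)]
      exact Set.mem_singleton _
    · exact lt_of_lt_of_le hlt (order_le_of_coeff_ne_zero ((δ.mem_support x).1 hx))

private lemma cutLT_iff' (hdiv : ∀ (g : Γ) (n : ℕ), 0 < n → ∃ h : Γ, n • h = g)
    (φ : Γ →+ Γ') (hφ : StrictMono φ) {δ : HahnSeries Γ' K} (hδ : δ ≠ 0) (p q : Γ × ℕ) :
    cutLT {g : Γ | dLT δ (mono K (φ g))} p q ↔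
      (q.2 ≤ p.2 ∧ φ q.1 + q.2 • δ.order < φ p.1 + p.2 • δ.order) := by
  set d0 := δ.order with hd0
  constructor
  · rintro (⟨hk, hlt⟩ | ⟨hk, u, hu, hle⟩)
    · exact ⟨hk.ge, by rw [hk]; exact add_lt_add_left (hφ hlt) _⟩
    · refine ⟨hk.le, ?_⟩
      have hu' : φ u < d0 := (mem_Sdelta_iff φ hδ u).1 hu
      have hj0 : p.2 - q.2 ≠ 0 := by omega
      have hcast : ((q.2:ℤ) - (p.2:ℤ)) • u = -(((p.2 - q.2 : ℕ)) • u) := by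
        have h1 : ((q.2:ℤ) - (p.2:ℤ)) = -((p.2 - q.2 : ℕ) : ℤ) := by omega
        rw [h1, neg_zsmul, natCast_zsmul]
      rw [hcast, neg_le, neg_sub] at hle
      have h2 : φ q.1 - φ p.1 ≤ (p.2 - q.2) • φ u := by
        have h3 := hφ.monotone hle
        rwa [map_sub, map_nsmul] at h3
      have h4 : φ q.1 - φ p.1 < (p.2 - q.2) • d0 :=
        lt_of_le_of_lt h2 (nsmul_lt_nsmul_of_lt' hj0 hu')
      rw [sub_nsmul'' d0 hk.le] at h4
      have h5 := sub_lt_sub_iff.1 h4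
      rwa [add_comm (p.2 • d0) (φ p.1)] at h5
  · rintro ⟨hk, hlt⟩
    rcases eq_or_lt_of_le hk with heq | hklt
    · exact Or.inl ⟨heq.symm, hφ.lt_iff_lt.1
        (by rw [heq] at hlt; exact lt_of_add_lt_add_right hlt)⟩
    · refine Or.inr ⟨hklt, ?_⟩
      obtain ⟨u, hu⟩ := hdiv (q.1 - p.1) (p.2 - q.2) (by omega)
      have h4 : φ q.1 - φ p.1 < (p.2 - q.2) • d0 := by
        rw [sub_nsmul'' d0 hk]
        exact sub_lt_sub_iff.2 (by rwa [add_comm (φ p.1) (p.2 • d0)] at hlt)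
      have h6 : (p.2 - q.2) • φ u < (p.2 - q.2) • d0 := by
        rw [← map_nsmul, hu, map_sub]; exact h4
      refine ⟨u, ?_, ?_⟩
      · exact (mem_Sdelta_iff φ hδ u).2 ((nsmul_lt_nsmul_iff'' (by omega)).1 h6)
      · have h1 : ((q.2:ℤ) - (p.2:ℤ)) = -((p.2 - q.2 : ℕ) : ℤ) := by omega
        rw [h1, neg_zsmul, natCast_zsmul, neg_le, neg_sub, hu]

end Prop36Aux

/-- **Proposition 3.6 (convergence duality).** For a divisible `𝔐 ⊆ 𝔑`, a power series
`P` over `𝕊 = K⟦𝔐⟧` and `δ ∈ 𝕋∖{0}`: `P ∈ 𝕊⟦X⟧_{𝔖_δ}` with `𝔖_δ = {m ∈ 𝔐 : m ≻ δ}` iff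
the family `(P_{k,m}·m·δ^k)`, indexed by the pairs `mX^k` with `m ∈ supp P_k`, is summable
in `𝕋`. -/
theorem statement16 {Γ Γ' K : Type} [AddCommGroup Γ] [LinearOrder Γ] [IsOrderedAddMonoid Γ]
    [AddCommGroup Γ'] [LinearOrder Γ'] [IsOrderedAddMonoid Γ'] [Field K]
    (hdiv : ∀ (g : Γ) (n : ℕ), 0 < n → ∃ h : Γ, n • h = g)
    (φ : Γ →+ Γ') (hφ : StrictMono φ)
    (P : ℕ → HahnSeries Γ K) (δ : HahnSeries Γ' K) (hδ : δ ≠ 0) :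
    InCut {g : Γ | dLT δ (mono K (φ g))} P ↔
      SummableF (fun q : {q : Γ × ℕ // q.1 ∈ (P q.2).support} =>
        ((P q.1.2).coeff q.1.1) • ((mono K (φ q.1.1) : HahnSeries Γ' K) * δ ^ q.1.2)) := by
  classical
  set d0 := δ.order with hd0
  set ε : HahnSeries Γ' K := single (-d0) 1 * δ with hεdef
  have hεne : ε ≠ 0 := mul_ne_zero (single_ne_zero one_ne_zero) hδ
  have hεord : ε.order = 0 := by
    rw [hεdef, order_mul (single_ne_zero (one_ne_zero : (1:K) ≠ 0)) hδ,
      order_single one_ne_zero, ← hd0, neg_add_cancel]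
  set C : Set Γ' := ↑(AddSubmonoid.closure ε.support) with hCdef
  have hC : C.IsPWO := by
    refine Set.IsPWO.addSubmonoid_closure (fun x hx => ?_) ε.isPWO_support
    have h := order_le_of_coeff_ne_zero ((ε.mem_support x).1 hx)
    rwa [hεord] at h
  have hpowC : ∀ k : ℕ, (ε ^ k).support ⊆ C := by
    intro k
    induction k with
    | zero =>
      intro g hg
      rw [pow_zero, support_one, Set.mem_singleton_iff] at hg
      rw [hg]; exact (AddSubmonoid.closure ε.support).zero_mem
    | succ k ih =>
      intro g hg
      rw [pow_succ] at hg
      obtain ⟨a, ha, b, hb, rfl⟩ := Set.mem_add.1 (support_mul_subset hg)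
      exact (AddSubmonoid.closure ε.support).add_mem (ih ha) (AddSubmonoid.subset_closure hb)
  have hδpow : ∀ (k : ℕ) (y : Γ'), (δ ^ k).coeff y = (ε ^ k).coeff (y - k • d0) := by
    intro k y
    have hsingle : (single (k • d0) (1:K)) * ε ^ k = δ ^ k := by
      rw [hεdef, mul_pow, single_pow, one_pow, smul_neg, ← mul_assoc, single_mul_single,
        one_mul, add_neg_cancel, single_zero_one, one_mul]
    have h := coeff_single_mul_add (r := (1:K)) (x := ε ^ k) (a := y - k • d0) (b := k • d0)
    rw [sub_add_cancel] at h
    rw [← hsingle, h, one_mul]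
  have hterm : ∀ (q : Γ × ℕ) (g : Γ'),
      ((mono K (φ q.1) : HahnSeries Γ' K) * δ ^ q.2).coeff g
        = (ε ^ q.2).coeff (g - (φ q.1 + q.2 • d0)) := by
    intro q g
    have h := coeff_single_mul_add (r := (1:K)) (x := δ ^ q.2) (a := g - φ q.1) (b := φ q.1)
    rw [sub_add_cancel] at h
    simp only [mono]
    rw [h, one_mul, hδpow, sub_sub]
  have hcoeff : ∀ (c : K) (q : Γ × ℕ) (g : Γ'),
      (c • ((mono K (φ q.1) : HahnSeries Γ' K) * δ ^ q.2)).coeff g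
        = c * (ε ^ q.2).coeff (g - (φ q.1 + q.2 • d0)) := by
    intro c q g
    rw [HahnSeries.coeff_smul, hterm, smul_eq_mul]
  have hord : ∀ (c : K) (q : Γ × ℕ), c ≠ 0 →
      (c • ((mono K (φ q.1) : HahnSeries Γ' K) * δ ^ q.2)).coeff (φ q.1 + q.2 • d0) ≠ 0 := by
    intro c q hc
    rw [hcoeff, sub_self]
    refine mul_ne_zero hc ?_
    have h0 : (ε ^ q.2).order = 0 := by rw [order_pow, hεord, smul_zero]
    have h1 := coeff_order_eq_zero.not.2 (pow_ne_zero q.2 hεne)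
    rwa [h0] at h1
  have hsuppC : ∀ (c : K) (q : Γ × ℕ) (g : Γ'),
      (c • ((mono K (φ q.1) : HahnSeries Γ' K) * δ ^ q.2)).coeff g ≠ 0 →
        g - (φ q.1 + q.2 • d0) ∈ C := by
    intro c q g hg
    rw [hcoeff] at hg
    exact hpowC q.2 (((ε ^ q.2).mem_support _).2 (right_ne_zero_of_mul hg))
  set ψ : Γ × ℕ → Γ' := fun q => φ q.1 + q.2 • d0 with hψdef
  set r : Γ × ℕ → Γ × ℕ → Prop := fun q p => q = p ∨ (q.2 ≤ p.2 ∧ ψ q < ψ p) with hrdef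
  haveI hrefl : IsRefl (Γ × ℕ) r := ⟨fun q => Or.inl rfl⟩
  haveI htrans : IsTrans (Γ × ℕ) r := ⟨by
    rintro a b c (rfl | ⟨h1, h2⟩) h
    · exact h
    · rcases h with rfl | ⟨h3, h4⟩
      · exact Or.inr ⟨h1, h2⟩
      · exact Or.inr ⟨le_trans h1 h3, lt_trans h2 h4⟩⟩
  haveI : IsPreorder (Γ × ℕ) r := { refl := fun q => Or.inl rfl }
  have hcutiff : InCut {g : Γ | dLT δ (mono K (φ g))} P ↔
      {q : Γ × ℕ | q.1 ∈ (P q.2).support}.PartiallyWellOrderedOn r := by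
    constructor
    · intro h; rw [Set.partiallyWellOrderedOn_iff_exists_lt]; intro f hf
      obtain ⟨i, j, hij, hc⟩ := h f hf
      refine ⟨i, j, hij, ?_⟩
      rcases hc with hc | hc
      · exact Or.inl hc.symm
      · obtain ⟨h1, h2⟩ := (cutLT_iff' hdiv φ hφ hδ _ _).1 hc
        exact Or.inr ⟨h1, h2⟩
    · intro h f hf
      obtain ⟨i, j, hij, hc⟩ := (Set.partiallyWellOrderedOn_iff_exists_lt.1 h) f hf
      refine ⟨i, j, hij, ?_⟩
      rcases hc with hc | ⟨h1, h2⟩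
      · exact Or.inl hc.symm
      · exact Or.inr ((cutLT_iff' hdiv φ hφ hδ _ _).2 ⟨h1, h2⟩)
  rw [hcutiff]
  constructor
  · intro hA
    refine ⟨?_, ?_⟩
    · -- union of supports is PWO
      have hΨ : (ψ '' {q : Γ × ℕ | q.1 ∈ (P q.2).support}).IsPWO := by
        rw [Set.IsPWO, Set.partiallyWellOrderedOn_iff_exists_lt]; intro f hf
        choose q hq hq2 using fun n => hf n
        obtain ⟨i, j, hij, hr⟩ := (Set.partiallyWellOrderedOn_iff_exists_lt.1 hA) q hq
        refine ⟨i, j, hij, ?_⟩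
        rcases hr with heq | ⟨-, hlt⟩
        · rw [← hq2 i, ← hq2 j, heq]
        · rw [← hq2 i, ← hq2 j]; exact hlt.le
      refine (hΨ.add hC).mono (Set.iUnion_subset fun q => ?_)
      intro g hg
      have hgne := ((HahnSeries.mem_support _ g).1 hg)
      refine Set.mem_add.2 ⟨ψ q.1, Set.mem_image_of_mem ψ
        (show q.1 ∈ {q : Γ × ℕ | q.1 ∈ (P q.2).support} from q.2),
        g - ψ q.1, hsuppC _ q.1 g hgne, by abel⟩
    · -- finitely many indices at each monomial
      intro g
      by_contra hg
      have hinf : Set.Infinite _ := hg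
      set u := hinf.natEmbedding with hudef
      have hq : ∀ n : ℕ, ((u n : {q : Γ × ℕ // q.1 ∈ (P q.2).support}) : Γ × ℕ)
          ∈ {q : Γ × ℕ | q.1 ∈ (P q.2).support} := fun n => (u n).1.2
      obtain ⟨e, he⟩ := hA.exists_monotone_subseq
        (f := fun n => ((u n : {q : Γ × ℕ // q.1 ∈ (P q.2).support}) : Γ × ℕ)) hq
      have hne : ∀ m n : ℕ, m ≠ n →
          ((u m : {q : Γ × ℕ // q.1 ∈ (P q.2).support}) : Γ × ℕ) ≠
          ((u n : {q : Γ × ℕ // q.1 ∈ (P q.2).support}) : Γ × ℕ) := by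
        intro m n hmn hv
        exact hmn (u.injective (Subtype.ext (Subtype.ext hv)))
      have hmono : StrictAnti (fun t : ℕ =>
          g - ψ ((u (e t) : {q : Γ × ℕ // q.1 ∈ (P q.2).support}) : Γ × ℕ)) := by
        intro a b hab
        rcases he a b hab.le with heq | ⟨-, hlt⟩
        · exact absurd heq (hne _ _ (fun h => (Nat.ne_of_lt hab) (e.injective h)))
        · exact sub_lt_sub_left hlt g
      have hmem : ∀ t : ℕ,
          g - ψ ((u (e t) : {q : Γ × ℕ // q.1 ∈ (P q.2).support}) : Γ × ℕ) ∈ C := by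
        intro t
        exact hsuppC _ _ _ (u (e t)).2
      exact (Set.isWF_iff_no_descending_seq.1 hC.isWF) _ hmono fun n => hmem n
  · rintro ⟨hU, hfin⟩; rw [Set.partiallyWellOrderedOn_iff_exists_lt]; intro f hf
    by_cases hrep : ∃ i j : ℕ, i < j ∧ f i = f j
    · obtain ⟨i, j, hij, hfe⟩ := hrep
      exact ⟨i, j, hij, Or.inl hfe⟩
    push_neg at hrep
    have hinj : Function.Injective f := by
      intro a b hab
      by_contra hne
      rcases Nat.lt_or_ge a b with h | h
      · exact hrep a b h hab
      · rcases Nat.lt_or_ge b a with h' | h'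
        · exact hrep b a h' hab.symm
        · omega
    have hψU : ∀ n : ℕ, ψ (f n) ∈ ⋃ i : {q : Γ × ℕ // q.1 ∈ (P q.2).support},
        ((fun q : {q : Γ × ℕ // q.1 ∈ (P q.2).support} =>
          ((P q.1.2).coeff q.1.1) • ((mono K (φ q.1.1) : HahnSeries Γ' K) * δ ^ q.1.2)) i).support := by
      intro n
      rw [Set.mem_iUnion]
      exact ⟨⟨f n, hf n⟩, (HahnSeries.mem_support _ _).2
        (hord _ (f n) ((HahnSeries.mem_support _ _).1 (hf n)))⟩
    obtain ⟨e, he⟩ := hU.exists_monotone_subseq (f := fun n => ψ (f n)) hψU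
    have hfib : ∀ v : Γ', {n : ℕ | ψ (f n) = v}.Finite := by
      intro v
      have hFinj : Function.Injective (fun n : ℕ =>
          (⟨f n, hf n⟩ : {q : Γ × ℕ // q.1 ∈ (P q.2).support})) :=
        fun a b h => hinj (congrArg Subtype.val h)
      have hsub : {n : ℕ | ψ (f n) = v} ⊆ (fun n : ℕ =>
          (⟨f n, hf n⟩ : {q : Γ × ℕ // q.1 ∈ (P q.2).support})) ⁻¹'
          {i : {q : Γ × ℕ // q.1 ∈ (P q.2).support} |
            ((fun q : {q : Γ × ℕ // q.1 ∈ (P q.2).support} =>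
              ((P q.1.2).coeff q.1.1) • ((mono K (φ q.1.1) : HahnSeries Γ' K) * δ ^ q.1.2)) i).coeff v ≠ 0} := by
        intro n hn
        have h1 := hord ((P (f n).2).coeff (f n).1) (f n)
          ((HahnSeries.mem_support _ _).1 (hf n))
        rw [Set.mem_setOf_eq] at hn
        rw [← hn]
        exact h1
      exact ((hfin v).preimage hFinj.injOn).subset hsub
    have hstep : ∀ m : ℕ, ∃ n : ℕ, m < n ∧ ψ (f (e m)) < ψ (f (e n)) := by
      intro m
      have hfe : {n : ℕ | ψ (f (e n)) = ψ (f (e m))}.Finite :=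
        (hfib (ψ (f (e m)))).preimage e.injective.injOn
      obtain ⟨N, hN⟩ := hfe.bddAbove
      refine ⟨max N m + 1, by omega, ?_⟩
      rcases lt_or_eq_of_le (he (show m ≤ max N m + 1 by omega)) with h | h
      · exact h
      · exfalso
        have hmem : (max N m + 1) ∈ {n : ℕ | ψ (f (e n)) = ψ (f (e m))} := h.symm
        have := hN hmem
        omega
    choose T hT1 hT2 using hstep
    have hn1 : ∀ t : ℕ, T^[t] 0 < T^[t + 1] 0 := by
      intro t
      rw [Function.iterate_succ_apply']
      exact hT1 _
    have hn2 : ∀ t : ℕ, ψ (f (e (T^[t] 0))) < ψ (f (e (T^[t + 1] 0))) := by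
      intro t
      rw [Function.iterate_succ_apply']
      exact hT2 _
    have hex : ∃ v : ℕ, ∃ t : ℕ, (f (e (T^[t] 0))).2 = v := ⟨_, 0, rfl⟩
    obtain ⟨t0, ht0⟩ := Nat.find_spec hex
    have hmin : ∀ t : ℕ, Nat.find hex ≤ (f (e (T^[t] 0))).2 := by
      intro t
      by_contra hlt
      exact Nat.find_min hex (by omega) ⟨t, rfl⟩
    refine ⟨e (T^[t0] 0), e (T^[t0 + 1] 0), e.strictMono (hn1 t0), Or.inr ⟨?_, hn2 t0⟩⟩
    rw [ht0]
    exact hmin (t0 + 1)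

end Art
end
end

section
/- Let K be a field of characteristic zero, 𝔐 a multiplicatively written linearly ordered abelian group, and 𝕊 = K⟦𝔐⟧. Let P = Σ_{k∈ℕ} P_k X^k ∈ 𝕊⟦X⟧ and let ε, δ ∈ Conv(P). Then every formal derivative P^{(k)} converges at ε (indeed Conv(P^{(n)}) = Conv(P) for all n), the translated power series P_{+ε} := Σ_{k∈ℕ} (P̃^{(k)}(ε)/k!)·X^k satisfies δ ∈ Conv(P_{+ε}), and P̃_{+ε}(δ) = P̃(ε + δ). -/
open HahnSeries
open scoped Classical

noncomputable section

namespace Art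

section AuxProof

open scoped Pointwise

variable {Γ K : Type} [AddCommGroup Γ] [LinearOrder Γ] [IsOrderedAddMonoid Γ] [Field K]

lemma coeff_hsumF {ι : Type} {s : ι → HahnSeries Γ K} (hs : SummableF s) (g : Γ) :
    (hsum s).coeff g = ∑ᶠ i, (s i).coeff g := by
  rw [hsum, dif_pos hs]
  exact SummableFamily.coeff_hsum

lemma exists_coeff_ne_of_hsum {ι : Type} {s : ι → HahnSeries Γ K} (hs : SummableF s) {g : Γ}
    (h : (hsum s).coeff g ≠ 0) : ∃ i, (s i).coeff g ≠ 0 := by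
  by_contra hc
  push_neg at hc
  rw [coeff_hsumF hs] at h
  exact h (by simp [hc])

/-- Transfer of summability along a support-domination estimate. -/
lemma summableF_trans {ι ι' : Type} {s : ι → HahnSeries Γ K} {t : ι' → HahnSeries Γ K}
    (hs : SummableF s) {B : Set Γ} (hB : B.IsPWO) (f : ι' → ι)
    (hf : ∀ i, {j | t j ≠ 0 ∧ f j = i}.Finite)
    (h : ∀ j, (t j).support ⊆ (s (f j)).support + B) : SummableF t := by
  constructor
  · refine (hs.1.add hB).mono ?_
    refine Set.iUnion_subset fun j => (h j).trans ?_
    exact Set.add_subset_add_right (Set.subset_iUnion (fun i => (s i).support) (f j))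
  · intro g
    have hU : (⋃ i, (s i).support).IsPWO := hs.1
    have hfin := Set.AddAntidiagonal.finite_of_isPWO hU hB g
    refine ((hfin.biUnion (fun p _ => ((hs.2 p.1).biUnion fun i _ => hf i)))).subset ?_
    intro j hj
    have hj0 : t j ≠ 0 := fun h0 => hj (by simp [h0])
    have hgt : g ∈ (t j).support := hj
    obtain ⟨u, hu, c, hc, huc⟩ := Set.mem_add.1 (h j hgt)
    have hmem : (u, c) ∈ Set.antidiagonal (⋃ i, (s i).support) B g :=
      Set.mem_antidiagonal.2 ⟨Set.mem_iUnion.2 ⟨f j, hu⟩, hc, huc⟩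
    exact Set.mem_biUnion hmem
      (Set.mem_biUnion (show f j ∈ {i | (s i).coeff u ≠ 0} from hu) ⟨hj0, rfl⟩)

lemma summableF_comp {ι ι' : Type} {s : ι → HahnSeries Γ K} (hs : SummableF s)
    {f : ι' → ι} (hf : Function.Injective f) : SummableF (fun j => s (f j)) := by
  refine ⟨hs.1.mono (Set.iUnion_subset fun j => Set.subset_iUnion (fun i => (s i).support) (f j)),
    fun g => ((hs.2 g).preimage hf.injOn).subset ?_⟩
  intro j hj
  exact hj

lemma summableF_smul {ι : Type} {s : ι → HahnSeries Γ K} (hs : SummableF s) (c : ι → K) :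
    SummableF fun i => c i • s i := by
  have hsub : ∀ i, (c i • s i).support ⊆ (s i).support := by
    intro i g hg
    simp only [HahnSeries.mem_support, HahnSeries.coeff_smul, smul_eq_mul] at hg ⊢
    exact fun h0 => hg (by rw [h0, mul_zero])
  constructor
  · exact hs.1.mono (Set.iUnion_subset fun i =>
      (hsub i).trans (Set.subset_iUnion (fun i => (s i).support) i))
  · intro g
    refine (hs.2 g).subset fun i hi => ?_
    exact hsub i hi

lemma isPWO_biUnion_finite {ι : Type} {A : Set ι} (hA : A.Finite) {f : ι → Set Γ}
    (hf : ∀ i, (f i).IsPWO) : (⋃ i ∈ A, f i).IsPWO := by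
  refine Set.Finite.induction_on (motive := fun A _ => (⋃ i ∈ A, f i).IsPWO) A hA ?_ ?_
  · simp [Set.isPWO_empty]
  · intro a s' _ _ ih
    rw [Set.biUnion_insert]
    exact (hf a).union ih

lemma summableF_of_finite {ι : Type} {s : ι → HahnSeries Γ K} (h : {i | s i ≠ 0}.Finite) :
    SummableF s := by
  constructor
  · have hsub : (⋃ i, (s i).support) ⊆ ⋃ i ∈ {i | s i ≠ 0}, (s i).support := by
      refine Set.iUnion_subset fun i g hg => ?_
      by_cases h0 : s i = 0
      · simp [h0] at hg
      · exact Set.mem_biUnion h0 hg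
    exact (isPWO_biUnion_finite h (fun i => (s i).isPWO_support)).mono hsub
  · intro g
    refine h.subset fun i hi => ?_
    simp only [Set.mem_setOf_eq] at hi ⊢
    exact fun h0 => hi (by simp [h0])

lemma summableF_of_succ {s : ℕ → HahnSeries Γ K} (h : SummableF fun k => s (k + 1)) :
    SummableF s := by
  constructor
  · refine ((s 0).isPWO_support.union h.1).mono ?_
    refine Set.iUnion_subset fun k => ?_
    cases k with
    | zero => exact Set.subset_union_left
    | succ n =>
      exact (Set.subset_iUnion (fun k => (s (k + 1)).support) n).trans Set.subset_union_right
  · intro g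
    refine (((h.2 g).image (· + 1)).insert 0).subset ?_
    intro k hk
    cases k with
    | zero => exact Set.mem_insert _ _
    | succ n => exact Set.mem_insert_of_mem _ ⟨n, hk, rfl⟩

lemma summableF_mulF {ι : Type} {s : ι → HahnSeries Γ K} (hs : SummableF s)
    (x : HahnSeries Γ K) : SummableF (fun i => s i * x) := by
  refine summableF_trans hs x.isPWO_support id (fun i => (Set.finite_singleton i).subset ?_)
    (fun j => HahnSeries.support_mul_subset)
  intro j hj
  exact hj.2

lemma hsum_mulF {ι : Type} {s : ι → HahnSeries Γ K} (hs : SummableF s) (x : HahnSeries Γ K) :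
    hsum (fun i => s i * x) = hsum s * x := by
  rw [hsum, hsum, dif_pos hs, dif_pos (summableF_mulF hs x)]
  have hkey : (SummableFamily.mk (fun i => s i * x) (summableF_mulF hs x).1
      (summableF_mulF hs x).2) = x • (SummableFamily.mk s hs.1 hs.2) := by
    apply DFunLike.coe_injective
    funext i
    show s i * x = (x • SummableFamily.mk s hs.1 hs.2) i
    rw [SummableFamily.smul_apply, HahnSeries.of_symm_smul_of_eq_mul]
    exact mul_comm (s i) x
  rw [hkey, SummableFamily.hsum_smul, mul_comm]

end AuxProof
section AuxProof2

open scoped Pointwise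

variable {Γ K : Type} [AddCommGroup Γ] [LinearOrder Γ] [IsOrderedAddMonoid Γ] [Field K]

lemma support_pow_subset_closure (t : HahnSeries Γ K) (k : ℕ) :
    (t ^ k).support ⊆ (AddSubmonoid.closure t.support : AddSubmonoid Γ) := by
  induction k with
  | zero =>
    intro g hg
    rw [pow_zero, HahnSeries.support_one, Set.mem_singleton_iff] at hg
    rw [hg, SetLike.mem_coe]
    exact AddSubmonoid.zero_mem _
  | succ k ih =>
    intro g hg
    rw [pow_succ] at hg
    obtain ⟨i, hi, j, hj, rfl⟩ := HahnSeries.support_mul_subset hg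
    exact SetLike.mem_coe.2 (AddSubmonoid.add_mem _ (SetLike.mem_coe.1 (ih hi))
      (AddSubmonoid.subset_closure hj))

lemma key_aux {P : ℕ → HahnSeries Γ K} {ε : HahnSeries Γ K}
    (hε : SummableF fun k => P k * ε ^ k) (t : HahnSeries Γ K)
    (ht : ∀ g ∈ t.support, 0 ≤ g) :
    SummableF fun p : ℕ × ℕ => P (p.1 + p.2) * ε ^ p.1 * (ε * t) ^ p.2 := by
  have hC : (↑(AddSubmonoid.closure t.support) : Set Γ).IsPWO :=
    t.isPWO_support.addSubmonoid_closure ht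
  refine summableF_trans hε hC (fun p => p.1 + p.2) ?_ ?_
  · intro m
    refine (Finset.finite_toSet (Finset.HasAntidiagonal.antidiagonal m)).subset fun p hp => ?_
    exact Finset.mem_coe.2 (Finset.HasAntidiagonal.mem_antidiagonal.2 hp.2)
  · intro p
    have heq : P (p.1 + p.2) * ε ^ p.1 * (ε * t) ^ p.2
        = (P (p.1 + p.2) * ε ^ (p.1 + p.2)) * t ^ p.2 := by
      rw [mul_pow, _root_.pow_add]; ring
    rw [heq]
    exact HahnSeries.support_mul_subset.trans
      (Set.add_subset_add_left (support_pow_subset_closure t p.2))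

lemma dbl_zero_left {P : ℕ → HahnSeries Γ K} {δ : HahnSeries Γ K}
    (hδ : SummableF fun k => P k * δ ^ k) :
    SummableF fun p : ℕ × ℕ => P (p.1 + p.2) * (0 : HahnSeries Γ K) ^ p.1 * δ ^ p.2 := by
  refine summableF_trans hδ (B := {(0 : Γ)}) ((Set.finite_singleton 0).isPWO)
    (fun p => p.2) ?_ ?_
  · intro i
    refine (Set.finite_singleton ((0 : ℕ), i)).subset ?_
    rintro ⟨n, k⟩ ⟨hne, rfl⟩
    cases n with
    | zero => rfl
    | succ m =>
      exfalso
      apply hne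
      rw [zero_pow (Nat.succ_ne_zero m), mul_zero, zero_mul]
  · rintro ⟨n, k⟩ g hg
    cases n with
    | zero =>
      rw [show P (0 + k) * (0 : HahnSeries Γ K) ^ 0 * δ ^ k = P k * δ ^ k by
        rw [zero_add, pow_zero, mul_one]] at hg
      exact Set.mem_add.2 ⟨g, hg, 0, rfl, add_zero g⟩
    | succ m =>
      rw [show P (m + 1 + k) * (0 : HahnSeries Γ K) ^ (m + 1) * δ ^ k = 0 by
        rw [zero_pow (Nat.succ_ne_zero m), mul_zero, zero_mul]] at hg
      simp at hg

lemma dbl_swap {P : ℕ → HahnSeries Γ K} {ε δ : HahnSeries Γ K}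
    (h : SummableF fun p : ℕ × ℕ => P (p.1 + p.2) * ε ^ p.1 * δ ^ p.2) :
    SummableF fun p : ℕ × ℕ => P (p.1 + p.2) * δ ^ p.1 * ε ^ p.2 := by
  have h2 := summableF_comp h (f := Prod.swap) Prod.swap_injective
  have heq : (fun p : ℕ × ℕ => P (p.1 + p.2) * δ ^ p.1 * ε ^ p.2)
      = fun p : ℕ × ℕ => P (p.swap.1 + p.swap.2) * ε ^ p.swap.1 * δ ^ p.swap.2 := by
    funext p
    simp only [Prod.fst_swap, Prod.snd_swap]
    rw [add_comm p.2 p.1]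
    ring
  rw [heq]
  exact h2

lemma dbl_summable {P : ℕ → HahnSeries Γ K} {ε δ : HahnSeries Γ K}
    (hε : SummableF fun k => P k * ε ^ k) (hδ : SummableF fun k => P k * δ ^ k) :
    SummableF fun p : ℕ × ℕ => P (p.1 + p.2) * ε ^ p.1 * δ ^ p.2 := by
  by_cases hε0 : ε = 0
  · subst hε0
    exact dbl_zero_left hδ
  by_cases hδ0 : δ = 0
  · subst hδ0
    exact dbl_swap (dbl_zero_left hε)
  set t : HahnSeries Γ K := ε⁻¹ * δ with ht_def
  have ht0 : t ≠ 0 := mul_ne_zero (inv_ne_zero hε0) hδ0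
  rcases le_total 0 t.order with hto | hto
  · have hδt : δ = ε * t := by
      rw [ht_def, ← mul_assoc, mul_inv_cancel₀ hε0, one_mul]
    have hk := key_aux hε t
      (fun g hg => le_trans hto (HahnSeries.order_le_of_coeff_ne_zero hg))
    rwa [← hδt] at hk
  · have hinv : (t⁻¹).order = -t.order := by
      have h1 := HahnSeries.order_mul (x := t) (y := t⁻¹) ht0 (inv_ne_zero ht0)
      rw [mul_inv_cancel₀ ht0, HahnSeries.order_one] at h1
      exact eq_neg_of_add_eq_zero_right h1.symm
    have hεt : ε = δ * t⁻¹ := by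
      rw [ht_def, mul_inv, inv_inv, mul_comm ε δ⁻¹, ← mul_assoc, mul_inv_cancel₀ hδ0, one_mul]
    have hk := key_aux hδ t⁻¹ (fun g hg => le_trans
      (by rw [hinv]; exact neg_nonneg.2 hto) (HahnSeries.order_le_of_coeff_ne_zero hg))
    rw [← hεt] at hk
    exact dbl_swap hk

end AuxProof2
section AuxProof3

open scoped Pointwise

variable {Γ K : Type} [AddCommGroup Γ] [LinearOrder Γ] [IsOrderedAddMonoid Γ] [Field K]

lemma zero_mem_conv (P : ℕ → HahnSeries Γ K) : (0 : HahnSeries Γ K) ∈ Conv P := by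
  refine summableF_of_finite ((Set.finite_singleton 0).subset ?_)
  intro k hk
  simp only [Set.mem_setOf_eq] at hk
  cases k with
  | zero => rfl
  | succ m =>
    exfalso
    exact hk (by rw [zero_pow (Nat.succ_ne_zero m), mul_zero])

lemma slice_summable {P : ℕ → HahnSeries Γ K} {ε : HahnSeries Γ K}
    (hε : SummableF fun k => P k * ε ^ k) (k : ℕ) :
    SummableF fun n => P (n + k) * ε ^ n := by
  by_cases hε0 : ε = 0
  · subst hε0
    refine summableF_of_finite ((Set.finite_singleton 0).subset ?_)
    intro n hn
    simp only [Set.mem_setOf_eq] at hn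
    cases n with
    | zero => rfl
    | succ m =>
      exfalso
      exact hn (by rw [zero_pow (Nat.succ_ne_zero m), mul_zero])
  · refine summableF_trans hε (B := ((ε⁻¹) ^ k).support) (HahnSeries.isPWO_support _)
      (fun n => n + k) ?_ ?_
    · intro i
      refine (Set.finite_singleton (i - k)).subset ?_
      rintro j ⟨-, hji⟩
      have hj' : j + k = i := hji
      exact Set.mem_singleton_iff.2 (by omega)
    · intro n
      have heq : P (n + k) * ε ^ n = (P (n + k) * ε ^ (n + k)) * (ε⁻¹) ^ k := by
        rw [mul_assoc, _root_.pow_add, mul_assoc, ← mul_pow, mul_inv_cancel₀ hε0, one_pow, mul_one]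
      rw [heq]
      exact HahnSeries.support_mul_subset

variable [CharZero K]

lemma iter_derivPS (k : ℕ) : ∀ (Q : ℕ → HahnSeries Γ K) (n : ℕ),
    derivPS^[k] Q n = (((n + k).factorial : K) * ((n.factorial : K))⁻¹) • Q (n + k) := by
  induction k with
  | zero =>
    intro Q n
    rw [Function.iterate_zero, id_eq, Nat.add_zero,
      mul_inv_cancel₀ (Nat.cast_ne_zero.2 (Nat.factorial_ne_zero n)), one_smul]
  | succ k ih =>
    intro Q n
    rw [Function.iterate_succ_apply, ih (derivPS Q) n]
    show _ • (((n + k : ℕ) : K) + 1) • Q (n + k + 1) = _ • Q (n + (k + 1))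
    rw [smul_smul, show n + (k + 1) = n + k + 1 from rfl]
    congr 1
    have hfac : (((n + k + 1).factorial : ℕ) : K) = (((n + k : ℕ) : K) + 1) * ((n + k).factorial : K) := by
      rw [Nat.factorial_succ]
      push_cast
      ring
    rw [hfac]
    ring

lemma conv_deriv_mem (P : ℕ → HahnSeries Γ K) {δ : HahnSeries Γ K} (hδ : δ ∈ Conv P) :
    δ ∈ Conv (derivPS P) := by
  by_cases hδ0 : δ = 0
  · subst hδ0; exact zero_mem_conv _
  have h1 : SummableF fun k => P (k + 1) * δ ^ k := by
    refine summableF_trans hδ (B := (δ⁻¹).support) (HahnSeries.isPWO_support _)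
      (fun k => k + 1) ?_ ?_
    · intro i
      refine (Set.finite_singleton (i - 1)).subset ?_
      rintro j ⟨-, hji⟩
      have hj' : j + 1 = i := hji
      exact Set.mem_singleton_iff.2 (by omega)
    · intro k
      have heq : P (k + 1) * δ ^ k = (P (k + 1) * δ ^ (k + 1)) * δ⁻¹ := by
        rw [mul_assoc, pow_succ, mul_assoc, mul_inv_cancel₀ hδ0, mul_one]
      rw [heq]
      exact HahnSeries.support_mul_subset
  show SummableF fun k => derivPS P k * δ ^ k
  have heq : (fun k => derivPS P k * δ ^ k)
      = fun k => (((k : ℕ) : K) + 1) • (P (k + 1) * δ ^ k) := by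
    funext k
    simp only [derivPS, smul_mul_assoc]
  rw [heq]
  exact summableF_smul h1 _

lemma conv_deriv_mem' (P : ℕ → HahnSeries Γ K) {δ : HahnSeries Γ K}
    (hδ : δ ∈ Conv (derivPS P)) : δ ∈ Conv P := by
  show SummableF fun k => P k * δ ^ k
  apply summableF_of_succ
  have hδ' : SummableF fun k => derivPS P k * δ ^ k := hδ
  have heq : (fun k => P (k + 1) * δ ^ (k + 1))
      = fun k => (((k : ℕ) : K) + 1)⁻¹ • ((derivPS P k * δ ^ k) * δ) := by
    funext k
    symm
    simp only [derivPS]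
    rw [smul_mul_assoc, smul_mul_assoc, smul_smul,
      inv_mul_cancel₀ (Nat.cast_add_one_ne_zero k), one_smul, mul_assoc, ← pow_succ]
  rw [heq]
  exact summableF_smul (summableF_mulF hδ' δ) _

lemma conv_deriv_eq (P : ℕ → HahnSeries Γ K) : Conv (derivPS P) = Conv P :=
  Set.ext fun _ => ⟨fun h => conv_deriv_mem' P h, fun h => conv_deriv_mem P h⟩

lemma conv_iter_deriv (P : ℕ → HahnSeries Γ K) (n : ℕ) :
    Conv (derivPS^[n] P) = Conv P := by
  induction n with
  | zero => rfl
  | succ n ih => rw [Function.iterate_succ_apply', conv_deriv_eq, ih]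

omit [CharZero K] in
lemma sum_binom_reindex (N : ℕ) (F : ℕ × ℕ → K)
    (hF : ∀ p : ℕ × ℕ, ¬(p.1 < N ∧ p.2 < N) → F p = 0) :
    ∑ k ∈ Finset.range N, ∑ n ∈ Finset.range N, F (n, k)
      = ∑ m ∈ Finset.range (2 * N), ∑ j ∈ Finset.range (m + 1), F (j, m - j) := by
  have hL : ∑ k ∈ Finset.range N, ∑ n ∈ Finset.range N, F (n, k)
      = ∑ p ∈ Finset.range N ×ˢ Finset.range N, F p := by
    rw [Finset.sum_product]
    exact Finset.sum_comm
  have hdisj : (↑(Finset.range (2 * N)) : Set ℕ).PairwiseDisjoint Finset.HasAntidiagonal.antidiagonal := by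
    intro m _ m' _ hne
    refine Finset.disjoint_left.2 fun p hp hp' => hne ?_
    rw [← Finset.HasAntidiagonal.mem_antidiagonal.1 hp, ← Finset.HasAntidiagonal.mem_antidiagonal.1 hp']
  have hR : ∑ m ∈ Finset.range (2 * N), ∑ j ∈ Finset.range (m + 1), F (j, m - j)
      = ∑ p ∈ (Finset.range (2 * N)).biUnion Finset.HasAntidiagonal.antidiagonal, F p := by
    rw [Finset.sum_biUnion hdisj]
    exact Finset.sum_congr rfl fun m _ =>
      (Finset.Nat.sum_antidiagonal_eq_sum_range_succ_mk F m).symm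
  rw [hL, hR]
  have h1 : ∑ p ∈ Finset.range N ×ˢ Finset.range N, F p
      = ∑ p ∈ Finset.range (2 * N) ×ˢ Finset.range (2 * N), F p := by
    refine Finset.sum_subset (Finset.product_subset_product ?_ ?_) ?_
    · exact Finset.range_subset_range.2 (by omega)
    · exact Finset.range_subset_range.2 (by omega)
    · intro p _ hp
      refine hF p fun hc => hp ?_
      exact Finset.mem_product.2 ⟨Finset.mem_range.2 hc.1, Finset.mem_range.2 hc.2⟩
  have h2 : ∑ p ∈ (Finset.range (2 * N)).biUnion Finset.HasAntidiagonal.antidiagonal, F p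
      = ∑ p ∈ Finset.range (2 * N) ×ˢ Finset.range (2 * N), F p := by
    refine Finset.sum_subset ?_ ?_
    · refine Finset.biUnion_subset.2 fun m hm => ?_
      intro p hp
      have hpm := Finset.HasAntidiagonal.mem_antidiagonal.1 hp
      have hm' := Finset.mem_range.1 hm
      exact Finset.mem_product.2 ⟨Finset.mem_range.2 (by omega), Finset.mem_range.2 (by omega)⟩
    · intro p hp hpB
      refine hF p fun hc => hpB ?_
      refine Finset.mem_biUnion.2 ⟨p.1 + p.2, Finset.mem_range.2 (by omega), ?_⟩
      exact Finset.HasAntidiagonal.mem_antidiagonal.2 rfl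
  rw [h1, h2]

end AuxProof3
section AuxProof4

variable {Γ K : Type} [AddCommGroup Γ] [LinearOrder Γ] [IsOrderedAddMonoid Γ] [Field K]

lemma coeff_finsetSum {ι : Type} (s : Finset ι) (f : ι → HahnSeries Γ K) (g : Γ) :
    (∑ i ∈ s, f i).coeff g = ∑ i ∈ s, (f i).coeff g := by
  classical
  induction s using Finset.induction_on with
  | empty => simp
  | @insert a s ha ih => rw [Finset.sum_insert ha, Finset.sum_insert ha, HahnSeries.coeff_add, ih]

/-- The binomial-like coefficient function used in the Taylor rearrangement. -/
def Fc (P : ℕ → HahnSeries Γ K) (ε δ : HahnSeries Γ K) (g : Γ) (p : ℕ × ℕ) : K :=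
  (((p.1 + p.2).choose p.2 : ℕ) : K) * (P (p.1 + p.2) * ε ^ p.1 * δ ^ p.2).coeff g

variable [CharZero K]

lemma choose_cast_eq (n k : ℕ) :
    (k.factorial : K)⁻¹ * (((n + k).factorial : K) * ((n.factorial : K))⁻¹)
      = (((n + k).choose k : ℕ) : K) := by
  have hnat : (n + k).choose k * k.factorial * n.factorial = (n + k).factorial := by
    have h := Nat.choose_mul_factorial_mul_factorial (Nat.le_add_left k n)
    rwa [Nat.add_sub_cancel] at h
  have hK : (((n + k).choose k : ℕ) : K) * (k.factorial : K) * (n.factorial : K)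
      = ((n + k).factorial : K) := by exact_mod_cast congrArg (Nat.cast (R := K)) hnat
  have h1 : (n.factorial : K) ≠ 0 := Nat.cast_ne_zero.2 (Nat.factorial_ne_zero n)
  have h2 : (k.factorial : K) ≠ 0 := Nat.cast_ne_zero.2 (Nat.factorial_ne_zero k)
  field_simp
  linear_combination -hK

end AuxProof4

/-- **Proposition 2.6 & Lemma 2.5 (translation of power series).** If `K` has
characteristic zero and `ε, δ ∈ Conv(P)`, then all formal derivatives of `P` have the same
convergence locus as `P`, the translated series `P_{+ε} = Σ_k (P̃^{(k)}(ε)/k!)·X^k`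
converges at `δ`, and `P̃_{+ε}(δ) = P̃(ε + δ)`. -/
theorem statement17 {Γ K : Type} [AddCommGroup Γ] [LinearOrder Γ] [IsOrderedAddMonoid Γ] [Field K] [CharZero K]
    (P : ℕ → HahnSeries Γ K) (ε δ : HahnSeries Γ K)
    (hε : ε ∈ Conv P) (hδ : δ ∈ Conv P) :
    (∀ n : ℕ, Conv (derivPS^[n] P) = Conv P) ∧
    δ ∈ Conv (fun k : ℕ => (k.factorial : K)⁻¹ • evalPS (derivPS^[k] P) ε) ∧
    evalPS (fun k : ℕ => (k.factorial : K)⁻¹ • evalPS (derivPS^[k] P) ε) δ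
      = evalPS P (ε + δ) := by
  have hε' : SummableF fun k => P k * ε ^ k := hε
  have hδ' : SummableF fun k => P k * δ ^ k := hδ
  have hD : SummableF fun p : ℕ × ℕ => P (p.1 + p.2) * ε ^ p.1 * δ ^ p.2 :=
    dbl_summable hε' hδ'
  -- summability of the `k`-slices of the double family
  have hDk : ∀ k : ℕ, SummableF fun n => P (n + k) * ε ^ n * δ ^ k := by
    intro k
    exact summableF_comp hD (f := fun n => (n, k))
      (fun a b h => by simpa using congrArg Prod.fst h)
  have hEk : ∀ k : ℕ, SummableF fun n =>
      (((n + k).factorial : K) * ((n.factorial : K))⁻¹) • (P (n + k) * ε ^ n * δ ^ k) :=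
    fun k => summableF_smul (hDk k) _
  have hSk : ∀ k : ℕ, SummableF fun n =>
      (((n + k).factorial : K) * ((n.factorial : K))⁻¹) • (P (n + k) * ε ^ n) :=
    fun k => summableF_smul (slice_summable hε' k) _
  -- the `k`-th translated coefficient times `δ ^ k`
  have hQ : ∀ k : ℕ, ((k.factorial : K)⁻¹ • evalPS (derivPS^[k] P) ε) * δ ^ k
      = (k.factorial : K)⁻¹ • hsum (fun n =>
          (((n + k).factorial : K) * ((n.factorial : K))⁻¹) • (P (n + k) * ε ^ n * δ ^ k)) := by
    intro k
    have h1 : evalPS (derivPS^[k] P) ε = hsum (fun n =>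
        (((n + k).factorial : K) * ((n.factorial : K))⁻¹) • (P (n + k) * ε ^ n)) := by
      show hsum (fun n => derivPS^[k] P n * ε ^ n) = _
      congr 1
      funext n
      rw [iter_derivPS, smul_mul_assoc]
    rw [smul_mul_assoc, h1, ← hsum_mulF (hSk k) (δ ^ k)]
    congr 2
    funext n
    rw [smul_mul_assoc]
  have hE : SummableF fun k => hsum (fun n =>
      (((n + k).factorial : K) * ((n.factorial : K))⁻¹) • (P (n + k) * ε ^ n * δ ^ k)) := by
    have hne : ∀ k g, (hsum (fun n =>
        (((n + k).factorial : K) * ((n.factorial : K))⁻¹)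
          • (P (n + k) * ε ^ n * δ ^ k))).coeff g ≠ 0 →
        ∃ n, (P (n + k) * ε ^ n * δ ^ k).coeff g ≠ 0 := by
      intro k g hg
      obtain ⟨n, hn⟩ := exists_coeff_ne_of_hsum (hEk k) hg
      refine ⟨n, fun h0 => hn ?_⟩
      rw [HahnSeries.coeff_smul, h0, smul_zero]
    constructor
    · refine hD.1.mono (Set.iUnion_subset fun k => ?_)
      intro g hg
      obtain ⟨n, hn⟩ := hne k g hg
      exact Set.mem_iUnion.2 ⟨(n, k), hn⟩
    · intro g
      refine ((hD.2 g).image Prod.snd).subset ?_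
      intro k hk
      obtain ⟨n, hn⟩ := hne k g hk
      exact ⟨(n, k), hn, rfl⟩
  have hQsum : SummableF fun k =>
      ((k.factorial : K)⁻¹ • evalPS (derivPS^[k] P) ε) * δ ^ k := by
    have heq : (fun k => ((k.factorial : K)⁻¹ • evalPS (derivPS^[k] P) ε) * δ ^ k)
        = fun k => (k.factorial : K)⁻¹ • hsum (fun n =>
            (((n + k).factorial : K) * ((n.factorial : K))⁻¹)
              • (P (n + k) * ε ^ n * δ ^ k)) := funext hQ
    rw [heq]
    exact summableF_smul hE _
  -- binomial expansion of `P m * (ε + δ) ^ m`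
  have hRexp : ∀ m : ℕ, P m * (ε + δ) ^ m = ∑ j ∈ Finset.range (m + 1),
      (m.choose j : K) • (P (j + (m - j)) * ε ^ j * δ ^ (m - j)) := by
    intro m
    rw [add_pow, Finset.mul_sum]
    refine Finset.sum_congr rfl fun j hj => ?_
    have hjm : j ≤ m := Nat.lt_succ_iff.1 (Finset.mem_range.1 hj)
    rw [Nat.add_sub_cancel' hjm, Nat.cast_smul_eq_nsmul K, nsmul_eq_mul]
    ring
  have hRsum : SummableF fun m => P m * (ε + δ) ^ m := by
    have hcoe : ∀ m g', (P m * (ε + δ) ^ m).coeff g' ≠ 0 →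
        ∃ j, j ≤ m ∧ (P (j + (m - j)) * ε ^ j * δ ^ (m - j)).coeff g' ≠ 0 := by
      intro m g' h
      rw [hRexp m, coeff_finsetSum] at h
      obtain ⟨j, hj, hne⟩ := Finset.exists_ne_zero_of_sum_ne_zero h
      refine ⟨j, Nat.lt_succ_iff.1 (Finset.mem_range.1 hj), fun h0 => hne ?_⟩
      rw [HahnSeries.coeff_smul, h0, smul_zero]
    constructor
    · refine hD.1.mono (Set.iUnion_subset fun m => ?_)
      intro g' hg'
      obtain ⟨j, hjm, hne⟩ := hcoe m g' hg'
      exact Set.mem_iUnion.2 ⟨(j, m - j), hne⟩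
    · intro g'
      refine ((hD.2 g').image (fun p => p.1 + p.2)).subset ?_
      intro m hm
      obtain ⟨j, hjm, hne⟩ := hcoe m g' hm
      exact ⟨(j, m - j), hne, show j + (m - j) = m by omega⟩
  refine ⟨fun n => conv_iter_deriv P n, hQsum, ?_⟩
  -- the evaluation identity, coefficientwise
  ext g
  have hfin := hD.2 g
  set N : ℕ := hfin.toFinset.sup (fun p => max p.1 p.2) + 1 with hN_def
  have hN : ∀ p : ℕ × ℕ, (P (p.1 + p.2) * ε ^ p.1 * δ ^ p.2).coeff g ≠ 0 →
      p.1 < N ∧ p.2 < N := by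
    intro p hp
    have hle := Finset.le_sup (f := fun p : ℕ × ℕ => max p.1 p.2) (hfin.mem_toFinset.2 hp)
    have h1 : p.1 ≤ hfin.toFinset.sup (fun p : ℕ × ℕ => max p.1 p.2) :=
      le_trans (le_max_left _ _) hle
    have h2 : p.2 ≤ hfin.toFinset.sup (fun p : ℕ × ℕ => max p.1 p.2) :=
      le_trans (le_max_right _ _) hle
    omega
  have hFzero : ∀ p : ℕ × ℕ, ¬(p.1 < N ∧ p.2 < N) → Fc P ε δ g p = 0 := by
    intro p hp
    by_cases hc : (P (p.1 + p.2) * ε ^ p.1 * δ ^ p.2).coeff g = 0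
    · rw [Fc, hc, mul_zero]
    · exact absurd (hN p hc) hp
  have hLHS : (evalPS (fun k => (k.factorial : K)⁻¹ • evalPS (derivPS^[k] P) ε) δ).coeff g
      = ∑ k ∈ Finset.range N, ∑ n ∈ Finset.range N, Fc P ε δ g (n, k) := by
    have h0 : (evalPS (fun k => (k.factorial : K)⁻¹ • evalPS (derivPS^[k] P) ε) δ).coeff g
        = ∑ᶠ k, (((k.factorial : K)⁻¹ • evalPS (derivPS^[k] P) ε) * δ ^ k).coeff g :=
      coeff_hsumF hQsum g
    have hterm : ∀ k, (((k.factorial : K)⁻¹ • evalPS (derivPS^[k] P) ε) * δ ^ k).coeff g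
        = ∑ n ∈ Finset.range N, Fc P ε δ g (n, k) := by
      intro k
      rw [hQ k, HahnSeries.coeff_smul, coeff_hsumF (hEk k) g, smul_eq_mul]
      have hsupp1 : (Function.support fun n =>
          ((((n + k).factorial : K) * ((n.factorial : K))⁻¹)
            • (P (n + k) * ε ^ n * δ ^ k)).coeff g).Finite := by
        refine ((hD.2 g).image Prod.fst).subset ?_
        intro n hn
        have hn' : ((((n + k).factorial : K) * ((n.factorial : K))⁻¹)
            • (P (n + k) * ε ^ n * δ ^ k)).coeff g ≠ 0 := hn
        have hco : (P (n + k) * ε ^ n * δ ^ k).coeff g ≠ 0 := fun h0 => hn' (by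
          rw [HahnSeries.coeff_smul, h0, smul_zero])
        exact ⟨(n, k), hco, rfl⟩
      rw [mul_finsum]
      have hsub : (Function.support fun n => (k.factorial : K)⁻¹ *
          (((((n + k).factorial : K) * ((n.factorial : K))⁻¹)
            • (P (n + k) * ε ^ n * δ ^ k)).coeff g)) ⊆ ↑(Finset.range N) := by
        intro n hn
        have hn' : (k.factorial : K)⁻¹ *
            (((((n + k).factorial : K) * ((n.factorial : K))⁻¹)
              • (P (n + k) * ε ^ n * δ ^ k)).coeff g) ≠ 0 := hn
        have hco : (P (n + k) * ε ^ n * δ ^ k).coeff g ≠ 0 := fun h0 => hn' (by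
          rw [HahnSeries.coeff_smul, h0, smul_zero, mul_zero])
        exact Finset.mem_coe.2 (Finset.mem_range.2 (hN (n, k) hco).1)
      rw [finsum_eq_sum_of_support_subset _ hsub]
      refine Finset.sum_congr rfl fun n _ => ?_
      rw [HahnSeries.coeff_smul, smul_eq_mul, ← mul_assoc, choose_cast_eq]
      rfl
    rw [h0, finsum_congr hterm]
    have hsubo : (Function.support fun k => ∑ n ∈ Finset.range N, Fc P ε δ g (n, k))
        ⊆ ↑(Finset.range N) := by
      intro k hk
      obtain ⟨n, -, hn⟩ := Finset.exists_ne_zero_of_sum_ne_zero (Function.mem_support.1 hk)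
      by_contra hkN
      refine hn (hFzero (n, k) fun hc => hkN ?_)
      exact Finset.mem_coe.2 (Finset.mem_range.2 hc.2)
    rw [finsum_eq_sum_of_support_subset _ hsubo]
  have hRHS : (evalPS P (ε + δ)).coeff g
      = ∑ m ∈ Finset.range (2 * N), ∑ j ∈ Finset.range (m + 1), Fc P ε δ g (j, m - j) := by
    have h0 : (evalPS P (ε + δ)).coeff g = ∑ᶠ m, (P m * (ε + δ) ^ m).coeff g :=
      coeff_hsumF hRsum g
    have hterm : ∀ m, (P m * (ε + δ) ^ m).coeff g
        = ∑ j ∈ Finset.range (m + 1), Fc P ε δ g (j, m - j) := by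
      intro m
      rw [hRexp m, coeff_finsetSum]
      refine Finset.sum_congr rfl fun j hj => ?_
      have hjm : j ≤ m := Nat.lt_succ_iff.1 (Finset.mem_range.1 hj)
      rw [HahnSeries.coeff_smul, smul_eq_mul, Fc]
      congr 1
      have hch : (j + (m - j)).choose (m - j) = m.choose j := by
        rw [Nat.add_sub_cancel' hjm, Nat.choose_symm hjm]
      exact_mod_cast hch.symm
    rw [h0, finsum_congr hterm]
    have hsubo : (Function.support fun m => ∑ j ∈ Finset.range (m + 1), Fc P ε δ g (j, m - j))
        ⊆ ↑(Finset.range (2 * N)) := by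
      intro m hm
      obtain ⟨j, hjmem, hj⟩ := Finset.exists_ne_zero_of_sum_ne_zero (Function.mem_support.1 hm)
      have hjm : j ≤ m := Nat.lt_succ_iff.1 (Finset.mem_range.1 hjmem)
      have hcoords : j < N ∧ m - j < N := by
        by_contra hc
        exact hj (hFzero (j, m - j) hc)
      exact Finset.mem_coe.2 (Finset.mem_range.2 (by omega))
    rw [finsum_eq_sum_of_support_subset _ hsubo]
  rw [hLHS, hRHS]
  exact sum_binom_reindex N (Fc P ε δ g) hFzero
end Art
end
end

section
/- Let K be a field, 𝔐 a multiplicatively written linearly ordered abelian group, and 𝕊 = K⟦𝔐⟧. Let P = Σ_{k∈ℕ} P_k X^k ∈ 𝕊⟦X⟧ and Q = Σ_{k>0} Q_k X^k ∈ X·𝕊⟦X⟧ be convergent power series, and let P∘Q ∈ 𝕊⟦X⟧ denote their formal composition P∘Q = P_0 + Σ_{k>0} (Σ_{n≥1} Σ_{m_1+⋯+m_n=k, m_i≥1} P_n Q_{m_1}⋯Q_{m_n})·X^k. Let ε_P ∈ Conv(P) and ε ∈ Conv(Q) be such that Q_m·ε^m ≺ ε_P for every m > 0. Then ε ∈ Conv(P∘Q)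 and (P∘Q)~(ε) = P̃(Q̃(ε)). -/
open HahnSeries
open scoped Classical

noncomputable section

namespace Art

section Aux
open HahnSeries.SummableFamily
variable {Γ : Type} [PartialOrder Γ] {K : Type} [AddCommMonoid K]

theorem summableF_coe {ι : Type} (f : SummableFamily Γ K ι) : SummableF (⇑f) :=
  ⟨f.isPWO_iUnion_support, f.finite_co_support⟩

theorem summableF_congr {ι : Type} {s t : ι → HahnSeries Γ K} (h : s = t) :
    SummableF s → SummableF t := by subst h; exact id

theorem hsum_coe {ι : Type} (f : SummableFamily Γ K ι) : Art.hsum (⇑f) = f.hsum := by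
  rw [Art.hsum, dif_pos (summableF_coe f)]
  exact congrArg SummableFamily.hsum (SummableFamily.coe_injective rfl)

theorem hsum_eq_of_coe {ι : Type} (f : SummableFamily Γ K ι) {s : ι → HahnSeries Γ K}
    (h : ∀ i, f i = s i) : Art.hsum s = f.hsum := by
  have : ⇑f = s := funext h
  rw [← this, hsum_coe]

theorem hsum_eq_finset_sum {ι : Type} (f : SummableFamily Γ K ι) (s : Finset ι)
    (h : ∀ i, f i ≠ 0 → i ∈ s) : f.hsum = ∑ i ∈ s, f i := by
  ext g
  rw [coeff_hsum_eq_sum_of_subset (t := s) (fun i hi => h i fun h0 => hi (by simp [h0]))]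
  exact (map_sum (coeff.addMonoidHom g) f s).symm

/-- Fiber family of a sigma-indexed summable family. -/
def fiberFam {κ : Type} {β : κ → Type} (f : SummableFamily Γ K (Σ k, β k)) (k : κ) :
    SummableFamily Γ K (β k) where
  toFun b := f ⟨k, b⟩
  isPWO_iUnion_support' := f.isPWO_iUnion_support.mono
    (Set.iUnion_subset fun b => Set.subset_iUnion_of_subset ⟨k, b⟩ subset_rfl)
  finite_co_support' g := by
    have : {b | (f ⟨k, b⟩).coeff g ≠ 0} ⊆ Sigma.mk k ⁻¹' {i | (f i).coeff g ≠ 0} := fun b hb => hb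
    exact ((f.finite_co_support g).preimage sigma_mk_injective.injOn).subset this

/-- Grouping a sigma-indexed summable family along fibers. -/
def groupFam {κ : Type} {β : κ → Type} (f : SummableFamily Γ K (Σ k, β k)) :
    SummableFamily Γ K κ where
  toFun k := (fiberFam f k).hsum
  isPWO_iUnion_support' := f.isPWO_iUnion_support.mono <| Set.iUnion_subset fun k =>
    (support_hsum_subset).trans (Set.iUnion_subset fun b =>
      Set.subset_iUnion_of_subset ⟨k, b⟩ subset_rfl)
  finite_co_support' g := by
    refine ((f.finite_co_support g).image Sigma.fst).subset fun k hk => ?_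
    rw [Set.mem_setOf_eq, coeff_hsum] at hk
    have : ∃ b, (f ⟨k, b⟩).coeff g ≠ 0 := by
      by_contra hb
      push_neg at hb
      exact hk (finsum_eq_zero_of_forall_eq_zero hb)
    obtain ⟨b, hb⟩ := this
    exact ⟨⟨k, b⟩, hb, rfl⟩

theorem hsum_groupFam {κ : Type} {β : κ → Type} (f : SummableFamily Γ K (Σ k, β k)) :
    (groupFam f).hsum = f.hsum := by
  ext g
  rw [coeff_hsum, coeff_hsum]
  classical
  set F : Finset (Σ k, β k) := (f.finite_co_support g).toFinset with hF
  set T : Finset κ := F.image Sigma.fst with hT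
  have hRHS : ∑ᶠ i, (f i).coeff g = ∑ i ∈ F, (f i).coeff g :=
    finsum_eq_sum _ (f.finite_co_support g)
  have hout : ∑ᶠ k, ((groupFam f) k).coeff g = ∑ k ∈ T, ((groupFam f) k).coeff g := by
    refine finsum_eq_sum_of_support_subset _ fun k hk => ?_
    rw [Function.mem_support] at hk
    have hk' : ((fiberFam f k).hsum).coeff g ≠ 0 := hk
    rw [coeff_hsum] at hk'
    have : ∃ b, (f ⟨k, b⟩).coeff g ≠ 0 := by
      by_contra hb
      push_neg at hb
      exact hk' (finsum_eq_zero_of_forall_eq_zero hb)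
    obtain ⟨b, hb⟩ := this
    exact Finset.coe_subset.mpr subset_rfl (Finset.mem_image.mpr ⟨⟨k, b⟩, by rw [hF]; exact (Set.Finite.mem_toFinset _).mpr hb, rfl⟩)
  rw [hRHS, hout]
  have hsub : F ⊆ T.sigma fun k => ((fiberFam f k).finite_co_support g).toFinset := by
    intro i hi
    rw [Finset.mem_sigma]
    refine ⟨Finset.mem_image.mpr ⟨i, hi, rfl⟩, ?_⟩
    refine (Set.Finite.mem_toFinset _).mpr ?_
    have : (f i).coeff g ≠ 0 := by rw [hF] at hi; exact (Set.Finite.mem_toFinset _).mp hi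
    exact (by cases i; exact this)
  have hbig : ∑ i ∈ F, (f i).coeff g
      = ∑ i ∈ T.sigma (fun k => ((fiberFam f k).finite_co_support g).toFinset),
        (f i).coeff g := by
    refine Finset.sum_subset hsub fun i _ hi => ?_
    by_contra h0
    exact hi (by rw [hF]; exact (Set.Finite.mem_toFinset _).mpr h0)
  rw [hbig, Finset.sum_sigma]
  refine Finset.sum_congr rfl fun k _ => ?_
  show ((fiberFam f k).hsum).coeff g = _
  rw [coeff_hsum]
  exact finsum_eq_sum _ ((fiberFam f k).finite_co_support g)

end Aux

section Core
variable {Γ : Type} [AddCommGroup Γ] [LinearOrder Γ] [IsOrderedAddMonoid Γ] {K : Type} [Field K]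

theorem pow_support_mem {W : AddSubmonoid Γ} {εP : HahnSeries Γ K}
    (hTW : ∀ x ∈ εP.support, x - εP.order ∈ W) :
    ∀ (n : ℕ) (x : Γ), (εP ^ n).coeff x ≠ 0 → x - n • εP.order ∈ W := by
  intro n
  induction n with
  | zero =>
    intro x hx
    rw [pow_zero, HahnSeries.coeff_one] at hx
    split_ifs at hx with h
    · subst h; simpa using W.zero_mem
    · exact absurd rfl hx
  | succ n ih =>
    intro x hx
    rw [pow_succ'] at hx
    obtain ⟨u, hu, v, hv, rfl⟩ := Set.mem_add.mp
      (HahnSeries.support_mul_subset (x := εP) (y := εP ^ n) hx)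
    have h1 : u - εP.order ∈ W := hTW u hu
    have h2 : v - n • εP.order ∈ W := ih v hv
    have : u + v - (n + 1) • εP.order = (u - εP.order) + (v - n • εP.order) := by
      rw [succ_nsmul]; abel
    rw [this]
    exact W.add_mem h1 h2

theorem survive_min {W : AddSubmonoid Γ} {εP : HahnSeries Γ K}
    (hW0 : ∀ x ∈ W, 0 ≤ x) (hTW : ∀ x ∈ εP.support, x - εP.order ∈ W)
    (hεP0 : εP ≠ 0) (s : HahnSeries Γ K) {a : Γ} (ha : s.coeff a ≠ 0) (n : ℕ) :
    ∃ b, s.coeff b ≠ 0 ∧ a - b ∈ W ∧ (s * εP ^ n).coeff (b + n • εP.order) ≠ 0 := by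
  set S : Set Γ := {x | s.coeff x ≠ 0 ∧ a - x ∈ W} with hS
  have hSwf : S.IsWF := s.isWF_support.subset fun x hx => hx.1
  have hSne : S.Nonempty := ⟨a, ha, by simpa using W.zero_mem⟩
  set b := hSwf.min hSne with hbdef
  have hbS : b ∈ S := hSwf.min_mem hSne
  have hord : (εP ^ n).order = n • εP.order := by rw [HahnSeries.order_pow]
  have hpow0 : εP ^ n ≠ 0 := pow_ne_zero _ hεP0
  have hpowc : (εP ^ n).coeff (n • εP.order) ≠ 0 := by
    rw [← hord]; exact fun h => hpow0 (HahnSeries.coeff_order_eq_zero.mp h)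
  refine ⟨b, hbS.1, hbS.2, ?_⟩
  have key : (s * εP ^ n).coeff (b + n • εP.order) = s.coeff b * (εP ^ n).coeff (n • εP.order) := by
    rw [HahnSeries.coeff_mul]
    refine Finset.sum_eq_single_of_mem (b, n • εP.order) ?_ ?_
    · rw [Finset.mem_addAntidiagonal]
      exact ⟨hbS.1, hpowc, rfl⟩
    · rintro ⟨u, v⟩ hmem hne
      by_contra h0
      have hu : s.coeff u ≠ 0 := left_ne_zero_of_mul h0
      have hv : (εP ^ n).coeff v ≠ 0 := right_ne_zero_of_mul h0
      rw [Finset.mem_addAntidiagonal] at hmem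
      have hw : v - n • εP.order ∈ W := pow_support_mem hTW n v hv
      have huv : u + v = b + n • εP.order := hmem.2.2
      have hu_eq : u = b - (v - n • εP.order) := by
        have h' : u = b + n • εP.order - v := eq_sub_of_add_eq huv
        rw [h']; abel
      have huS : u ∈ S := by
        refine ⟨hu, ?_⟩
        have : a - u = (a - b) + (v - n • εP.order) := by rw [hu_eq]; abel
        rw [this]
        exact W.add_mem hbS.2 hw
      have hle : b ≤ u := hSwf.min_le hSne huS
      have hge : u ≤ b := by rw [hu_eq]; exact sub_le_self _ (hW0 _ hw)
      have hub : u = b := le_antisymm hge hle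
      have hveq : v = n • εP.order := by
        have := huv; rw [hub] at this; exact add_left_cancel this
      exact hne (by rw [hub, hveq])
  rw [key]
  exact mul_ne_zero hbS.1 hpowc
end Core

section Prod
variable {Γ : Type} [AddCommGroup Γ] [LinearOrder Γ] [IsOrderedAddMonoid Γ] {K : Type} [Field K]
open HahnSeries.SummableFamily

/-- The `n`-fold product family of a summable family indexed by `ℕ`. -/
def prodFam (A : SummableFamily Γ K ℕ) : ∀ n : ℕ, SummableFamily Γ K (Fin n → ℕ)
  | 0 => SummableFamily.Equiv (Equiv.equivPUnit.{1, 1} (Fin 0 → ℕ)).symm (SummableFamily.single PUnit.unit 1)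
  | n + 1 => SummableFamily.Equiv (Fin.consEquiv fun _ => ℕ) (SummableFamily.smul A (prodFam A n))

theorem prodFam_apply (A : SummableFamily Γ K ℕ) :
    ∀ (n : ℕ) (m : Fin n → ℕ), prodFam A n m = ∏ i, A (m i) := by
  intro n
  induction n with
  | zero => intro m; simp [prodFam]
  | succ n ih =>
    intro m
    show (SummableFamily.smul A (prodFam A n)) ((Fin.consEquiv fun _ => ℕ).symm m) = _
    rw [Fin.consEquiv_symm_apply]
    rw [smul_toFun, HahnSeries.of_symm_smul_of_eq_mul]
    rw [ih, Fin.prod_univ_succ]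
    rfl

theorem prodFam_hsum (A : SummableFamily Γ K ℕ) :
    ∀ n : ℕ, (prodFam A n).hsum = A.hsum ^ n := by
  intro n
  induction n with
  | zero => rw [prodFam, hsum_equiv, hsum_single, pow_zero]
  | succ n ih =>
    rw [prodFam, hsum_equiv, smul_hsum, HahnSeries.of_symm_smul_of_eq_mul, ih, pow_succ']

theorem prod_coeff_decomp {ι' : Type} (s : Finset ι') (f : ι' → HahnSeries Γ K) (g : Γ)
    (h : (∏ i ∈ s, f i).coeff g ≠ 0) :
    ∃ c : ι' → Γ, (∀ i ∈ s, (f i).coeff (c i) ≠ 0) ∧ ∑ i ∈ s, c i = g := by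
  classical
  induction s using Finset.induction_on generalizing g with
  | empty =>
    rw [Finset.prod_empty, HahnSeries.coeff_one] at h
    split_ifs at h with h0
    · exact ⟨fun _ => 0, by simp, by simp [h0]⟩
    · exact absurd rfl h
  | @insert a s ha ih =>
    rw [Finset.prod_insert ha] at h
    obtain ⟨x, hx, y, hy, rfl⟩ := Set.mem_add.mp
      (HahnSeries.support_mul_subset (x := f a) (y := ∏ i ∈ s, f i) h)
    obtain ⟨c, hc, hcsum⟩ := ih y hy
    refine ⟨Function.update c a x, ?_, ?_⟩
    · intro i hi
      rcases Finset.mem_insert.mp hi with rfl | hi'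
      · rw [Function.update_self]; exact hx
      · rw [Function.update_of_ne (fun h' => ha (by rw [← h']; exact hi')) _ _]; exact hc i hi'
    · rw [Finset.sum_insert ha, Function.update_self]
      congr 1
      rw [← hcsum]
      exact Finset.sum_congr rfl fun i hi =>
        Function.update_of_ne (fun h' => ha (by rw [← h']; exact hi)) _ _
end Prod

section PS
/-- Coefficient of a power of a power series as a finite sum over tuples. -/
theorem coeff_mk_pow {R : Type*} [CommSemiring R] (f : ℕ → R) (n k : ℕ) :
    PowerSeries.coeff (R := R) k ((PowerSeries.mk f) ^ n) =
      ∑ m ∈ (Fintype.piFinset fun _ : Fin n => Finset.range (k + 1)).filter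
        (fun m => ∑ j, m j = k), ∏ j, f (m j) := by
  classical
  rw [show (PowerSeries.mk f) ^ n = ∏ _j ∈ (Finset.univ : Finset (Fin n)), PowerSeries.mk f by
    rw [Finset.prod_const, Finset.card_univ, Fintype.card_fin]]
  rw [PowerSeries.coeff_prod]
  refine Finset.sum_nbij' (fun l => ⇑l) (fun m => Finsupp.equivFunOnFinite.symm m) ?_ ?_ ?_ ?_ ?_
  · intro l hl
    rw [Finset.mem_finsuppAntidiag] at hl
    rw [Finset.mem_filter]
    constructor
    · rw [Fintype.mem_piFinset]
      intro j
      rw [Finset.mem_range, Nat.lt_succ_iff]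
      calc l j ≤ ∑ i, l i := Finset.single_le_sum (fun i _ => Nat.zero_le _) (Finset.mem_univ j)
        _ = k := hl.1
    · exact hl.1
  · intro m hm
    rw [Finset.mem_filter] at hm
    rw [Finset.mem_finsuppAntidiag]
    exact ⟨hm.2, Finset.subset_univ _⟩
  · intro l _; exact Finsupp.equivFunOnFinite.symm_apply_apply l
  · intro m _; exact Finsupp.equivFunOnFinite.apply_symm_apply m
  · intro l _; exact Finset.prod_congr rfl fun j _ => PowerSeries.coeff_mk _ _
end PS


theorem statement18' {Γ K : Type} [AddCommGroup Γ] [LinearOrder Γ] [IsOrderedAddMonoid Γ] [Field K]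
    (P Q : ℕ → HahnSeries Γ K) (hQ0 : Q 0 = 0)
    (εP ε : HahnSeries Γ K) (hεP : εP ∈ Conv P) (hε : ε ∈ Conv Q)
    (hsmall : ∀ m : ℕ, 0 < m → dLT (Q m * ε ^ m) εP) :
    ε ∈ Conv (compPS P Q) ∧ evalPS (compPS P Q) ε = evalPS P (evalPS Q ε) := by
  classical
  have hεP' : SummableF (fun k : ℕ => P k * εP ^ k) := hεP
  have hε' : SummableF (fun k : ℕ => Q k * ε ^ k) := hε
  have hεPne : εP ≠ 0 := (hsmall 1 one_pos).1
  set e : Γ := εP.order with he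
  set T : Set Γ := (fun x => x - e) '' (εP.support ∪ ⋃ m : ℕ, (Q (m+1) * ε ^ (m+1)).support)
    with hTdef
  have hbase_pwo : (εP.support ∪ ⋃ m : ℕ, (Q (m+1) * ε ^ (m+1)).support).IsPWO :=
    εP.isPWO_support.union (hε'.1.mono (Set.iUnion_subset fun m =>
      Set.subset_iUnion_of_subset (m+1) subset_rfl))
  have hTpwo : T.IsPWO := hbase_pwo.image_of_monotone (fun x y hxy => sub_le_sub_right hxy e)
  have hT0 : ∀ x ∈ T, 0 ≤ x := by
    rintro x ⟨y, hy, rfl⟩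
    rcases hy with hy | hy
    · exact sub_nonneg.mpr (εP.order_le_of_coeff_ne_zero hy)
    · obtain ⟨sm, hsm⟩ := Set.mem_iUnion.mp hy
      obtain ⟨h, hh, hlt⟩ := (hsmall (sm+1) (Nat.succ_pos _)).2 y hsm
      have hle : e ≤ h := εP.order_le_of_coeff_ne_zero hh
      exact sub_nonneg.mpr (le_of_lt (lt_of_le_of_lt hle hlt))
  set W : AddSubmonoid Γ := AddSubmonoid.closure T with hWdef
  have hWpwo : (W : Set Γ).IsPWO := Set.IsPWO.addSubmonoid_closure hT0 hTpwo
  have hW0 : ∀ x ∈ W, 0 ≤ x := fun x hx =>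
    AddSubmonoid.closure_induction (fun y hy => hT0 y hy) le_rfl
      (fun a b _ _ ha hb => add_nonneg ha hb) hx
  have hTW : ∀ x ∈ εP.support, x - e ∈ W := fun x hx =>
    AddSubmonoid.subset_closure ⟨x, Or.inl hx, rfl⟩
  have hQW : ∀ (m : ℕ) (x : Γ), (Q (m+1) * ε ^ (m+1)).coeff x ≠ 0 → x - e ∈ W := fun m x hx =>
    AddSubmonoid.subset_closure ⟨x, Or.inr (Set.mem_iUnion.mpr ⟨m, hx⟩), rfl⟩
  set Qfam : HahnSeries.SummableFamily Γ K ℕ := ⟨fun k => Q k * ε ^ k, hε'.1, hε'.2⟩ with hQfamdef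
  set δ : HahnSeries Γ K := Qfam.hsum with hδdef
  have hδeval : evalPS Q ε = δ := hsum_eq_of_coe Qfam (fun k => rfl)
  have key : ∀ (n : ℕ) (m : Fin n → ℕ) (g : Γ),
      (P n * ∏ i, (Q (m i) * ε ^ (m i))).coeff g ≠ 0 →
      ∃ q, (P n * εP ^ n).coeff q ≠ 0 ∧ g - q ∈ W := by
    intro n m g hg
    have hm : ∀ i, m i ≠ 0 := by
      intro i h0
      apply hg
      rw [Finset.prod_eq_zero (Finset.mem_univ i) (by rw [h0, hQ0, zero_mul]), mul_zero,
        HahnSeries.coeff_zero]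
    obtain ⟨x, hx, y, hy, rfl⟩ := Set.mem_add.mp
      (HahnSeries.support_mul_subset (x := P n)
        (y := ∏ i, (Q (m i) * ε ^ (m i))) hg)
    obtain ⟨c, hc, hcsum⟩ := prod_coeff_decomp Finset.univ _ y hy
    obtain ⟨b, hb, hbW, hq⟩ := survive_min hW0 hTW hεPne (P n) hx n
    refine ⟨b + n • e, hq, ?_⟩
    have hci : ∀ i : Fin n, c i - e ∈ W := by
      intro i
      obtain ⟨m', hm'⟩ : ∃ m', m i = m' + 1 :=
        ⟨m i - 1, (Nat.succ_pred_eq_of_pos (Nat.pos_of_ne_zero (hm i))).symm⟩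
      exact hQW m' (c i) (by rw [← hm']; exact hc i (Finset.mem_univ i))
    have harr : x + y - (b + n • e) = (x - b) + ∑ i : Fin n, (c i - e) := by
      rw [← hcsum, Finset.sum_sub_distrib, Finset.sum_const, Finset.card_univ, Fintype.card_fin]
      abel
    rw [harr]
    exact W.add_mem hbW (AddSubmonoid.sum_mem W fun i _ => hci i)
  have bigVal : ∀ (n : ℕ) (m : Fin n → ℕ),
      (P n • prodFam Qfam n) m = P n * ∏ i, (Q (m i) * ε ^ (m i)) := by
    intro n m
    rw [HahnSeries.SummableFamily.smul_apply, HahnSeries.of_symm_smul_of_eq_mul, prodFam_apply]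
    rfl
  have bigPWO : (⋃ i : Σ n : ℕ, Fin n → ℕ, ((P i.1 • prodFam Qfam i.1) i.2).support).IsPWO := by
    refine (hεP'.1.add hWpwo).mono ?_
    intro g hg
    rw [Set.mem_iUnion] at hg
    obtain ⟨i, hgi⟩ := hg
    rw [HahnSeries.mem_support, bigVal] at hgi
    obtain ⟨q, hq, hqW⟩ := key i.1 i.2 g hgi
    exact Set.mem_add.mpr ⟨q, Set.mem_iUnion.mpr ⟨i.1, (HahnSeries.mem_support _ _).mpr hq⟩, g - q, hqW, by simp⟩
  have bigFin : ∀ g : Γ, {i : Σ n : ℕ, Fin n → ℕ |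
      ((P i.1 • prodFam Qfam i.1) i.2).coeff g ≠ 0}.Finite := by
    intro g
    have hYfin : (Set.antidiagonal (⋃ k : ℕ, (P k * εP ^ k).support) (W : Set Γ) g).Finite :=
      Set.AddAntidiagonal.finite_of_isPWO hεP'.1 hWpwo g
    have hNfin : (⋃ p ∈ Set.antidiagonal (⋃ k : ℕ, (P k * εP ^ k).support) (W : Set Γ) g,
        {n : ℕ | (P n * εP ^ n).coeff p.1 ≠ 0}).Finite :=
      hYfin.biUnion fun p _ => hεP'.2 p.1
    refine (hNfin.biUnion fun n _ =>
      (show Set.Finite (Function.support fun a => ((P n • prodFam Qfam n) a).coeff g) from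
        (P n • prodFam Qfam n).finite_co_support g).image (Sigma.mk n)).subset ?_
    rintro ⟨n, m⟩ hi
    rw [Set.mem_setOf_eq] at hi
    have hi' := hi
    rw [bigVal] at hi'
    obtain ⟨q, hq, hqW⟩ := key n m g hi'
    have hpY : (q, g - q) ∈ Set.antidiagonal (⋃ k : ℕ, (P k * εP ^ k).support) (W : Set Γ) g :=
      Set.mem_antidiagonal.mpr
        ⟨Set.mem_iUnion.mpr ⟨n, (HahnSeries.mem_support _ _).mpr hq⟩, hqW, by simp⟩
    have hnN : n ∈ ⋃ p ∈ Set.antidiagonal (⋃ k : ℕ, (P k * εP ^ k).support) (W : Set Γ) g,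
        {n : ℕ | (P n * εP ^ n).coeff p.1 ≠ 0} :=
      Set.mem_biUnion hpY hq
    exact Set.mem_biUnion hnN ⟨m, hi, rfl⟩
  set bigFam : HahnSeries.SummableFamily Γ K (Σ n : ℕ, Fin n → ℕ) :=
    ⟨fun i => (P i.1 • prodFam Qfam i.1) i.2, bigPWO, bigFin⟩ with hbigdef
  -- Way 1 : group by n
  have grp1 : ∀ n : ℕ, (groupFam bigFam) n = P n * δ ^ n := by
    intro n
    show (fiberFam bigFam n).hsum = _
    have hfib : fiberFam bigFam n = P n • prodFam Qfam n :=
      HahnSeries.SummableFamily.coe_injective rfl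
    rw [hfib, HahnSeries.SummableFamily.hsum_smul, prodFam_hsum]
  have hPδeval : evalPS P δ = bigFam.hsum := by
    rw [show evalPS P δ = Art.hsum (fun n : ℕ => P n * δ ^ n) from rfl,
      hsum_eq_of_coe (groupFam bigFam) grp1, hsum_groupFam]
  -- Way 2 : group by total degree
  set π : (Σ n : ℕ, Fin n → ℕ) → ℕ := fun i => ∑ j, i.2 j with hπdef
  set f2 := HahnSeries.SummableFamily.Equiv (Equiv.sigmaFiberEquiv π).symm bigFam with hf2def
  have hf2sum : f2.hsum = bigFam.hsum := HahnSeries.SummableFamily.hsum_equiv _ _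
  have grp2 : ∀ k : ℕ, (groupFam f2) k = compPS P Q k * ε ^ k := by
    intro k
    show (fiberFam f2 k).hsum = _
    set Sk : Finset (Σ n : ℕ, Fin n → ℕ) :=
      (Finset.range (k+1)).sigma (fun n => Fintype.piFinset fun _ : Fin n => Finset.range (k+1))
      with hSkdef
    have hval : ∀ i : {x : Σ n : ℕ, Fin n → ℕ // π x = k},
        (fiberFam f2 k) i = (P (i : Σ n : ℕ, Fin n → ℕ).1 • prodFam Qfam
          (i : Σ n : ℕ, Fin n → ℕ).1) (i : Σ n : ℕ, Fin n → ℕ).2 := fun i => rfl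
    have hmem : ∀ i : {x : Σ n : ℕ, Fin n → ℕ // π x = k},
        (fiberFam f2 k) i ≠ 0 → i ∈ Sk.subtype (fun i => π i = k) := by
      rintro ⟨⟨n, m⟩, hik⟩ hne
      have hik' : ∑ j, m j = k := hik
      rw [Finset.mem_subtype]
      have hne' : (P n • prodFam Qfam n) m ≠ 0 := hne
      have hm : ∀ j, m j ≠ 0 := by
        intro j h0
        apply hne'
        rw [bigVal, Finset.prod_eq_zero (Finset.mem_univ j) (by rw [h0, hQ0, zero_mul]), mul_zero]
      rw [hSkdef, Finset.mem_sigma]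
      constructor
      · rw [Finset.mem_range, Nat.lt_succ_iff]
        calc n = ∑ _j : Fin n, 1 := by simp
          _ ≤ ∑ j, m j := Finset.sum_le_sum fun j _ => Nat.one_le_iff_ne_zero.mpr (hm j)
          _ = k := hik'
      · rw [Fintype.mem_piFinset]
        intro j
        rw [Finset.mem_range, Nat.lt_succ_iff]
        calc m j ≤ ∑ j', m j' :=
              Finset.single_le_sum (fun _ _ => Nat.zero_le _) (Finset.mem_univ j)
          _ = k := hik'
    rw [hsum_eq_finset_sum _ _ hmem]
    have hsum1 : ∑ i ∈ Sk.subtype (fun i => π i = k), (fiberFam f2 k) i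
        = ∑ i ∈ Sk.filter (fun i => π i = k),
            (P i.1 • prodFam Qfam i.1) i.2 := by
      rw [← Finset.sum_subtype_eq_sum_filter]
      exact Finset.sum_congr rfl fun i _ => hval i
    rw [hsum1]
    simp only [compPS]
    rw [Finset.sum_mul, Finset.sum_filter, hSkdef, Finset.sum_sigma]
    refine Finset.sum_congr rfl fun n _ => ?_
    rw [coeff_mk_pow, Finset.mul_sum, Finset.sum_mul, Finset.sum_filter]
    refine Finset.sum_congr rfl fun m _ => ?_
    by_cases hc : ∑ j, m j = k
    · rw [if_pos hc, if_pos (show π ⟨n, m⟩ = k from hc), bigVal, Finset.prod_mul_distrib,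
        Finset.prod_pow_eq_pow_sum, hc, mul_assoc]
    · rw [if_neg hc, if_neg (show ¬ π ⟨n, m⟩ = k from hc)]
  have hconv : SummableF (fun k : ℕ => compPS P Q k * ε ^ k) :=
    summableF_congr (funext grp2) (summableF_coe (groupFam f2))
  have heval2 : evalPS (compPS P Q) ε = bigFam.hsum := by
    rw [show evalPS (compPS P Q) ε = Art.hsum (fun k : ℕ => compPS P Q k * ε ^ k) from rfl,
      hsum_eq_of_coe (groupFam f2) grp2, hsum_groupFam, hf2sum]
  exact ⟨hconv, by rw [heval2, hδeval, hPδeval]⟩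


/-- **Proposition 2.9 (composition of convergent power series).** Let `P` and `Q` be
convergent power series over `𝕊` with `Q₀ = 0`, and let `ε_P ∈ Conv(P)`, `ε ∈ Conv(Q)`
with `Q_m·ε^m ≺ ε_P` for every `m > 0`. Then `ε ∈ Conv(P∘Q)` and
`(P∘Q)~(ε) = P̃(Q̃(ε))`. -/
theorem statement18 {Γ K : Type} [AddCommGroup Γ] [LinearOrder Γ] [IsOrderedAddMonoid Γ] [Field K]
    (P Q : ℕ → HahnSeries Γ K) (hQ0 : Q 0 = 0)
    (hPc : ∃ s : HahnSeries Γ K, s ≠ 0 ∧ s ∈ Conv P)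
    (hQc : ∃ s : HahnSeries Γ K, s ≠ 0 ∧ s ∈ Conv Q)
    (εP ε : HahnSeries Γ K) (hεP : εP ∈ Conv P) (hε : ε ∈ Conv Q)
    (hsmall : ∀ m : ℕ, 0 < m → dLT (Q m * ε ^ m) εP) :
    ε ∈ Conv (compPS P Q) ∧ evalPS (compPS P Q) ε = evalPS P (evalPS Q ε) :=
  statement18' P Q hQ0 εP ε hεP hε hsmall
end Art
end
end

section
/- Let K be a field of characteristic zero, 𝔐 a multiplicatively written nontrivial linearly ordered abelian group, and 𝕊 = K⟦𝔐⟧. Let P = Σ_{k∈ℕ} P_k X^k ∈ 𝕊⟦X⟧ be a convergent power series and let δ ∈ Conv(P) with δ ≠ 0. If P̃(ε) = 0 for every ε ∈ 𝕊 with ε ≼ δ, then P = 0 (i.e. P_k = 0 for all k). -/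
open HahnSeries
open scoped Classical

noncomputable section

namespace Art

set_option synthInstance.maxHeartbeats 1000000 in
private lemma aux_smul_pow_comm {Γ K : Type} [AddCommGroup Γ] [LinearOrder Γ] [IsOrderedAddMonoid Γ] [Field K]
    (s δ : HahnSeries Γ K) (c : K) (k : ℕ) :
    s * (c • δ) ^ k = c ^ k • (s * δ ^ k) := by
  rw [smul_pow, mul_smul_comm]

/-- **Proposition 2.11 (zeroes of power series).** If `K` has characteristic zero and `𝔐`
is nontrivial, `P` is a convergent power series, `δ ∈ Conv(P)∖{0}`, and `P̃(ε) = 0` for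
every `ε ≼ δ`, then `P = 0`. -/
theorem statement19 {Γ K : Type} [AddCommGroup Γ] [LinearOrder Γ] [IsOrderedAddMonoid Γ] [Nontrivial Γ]
    [Field K] [CharZero K]
    (P : ℕ → HahnSeries Γ K) (δ : HahnSeries Γ K)
    (hδ : δ ∈ Conv P) (hδ0 : δ ≠ 0)
    (hzero : ∀ ε : HahnSeries Γ K, dLE ε δ → evalPS P ε = 0) :
    ∀ k : ℕ, P k = 0 := by
  have hcsum : ∀ c : K, (fun k => P k * (c • δ) ^ k) = fun k => c ^ k • (P k * δ ^ k) := by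
    intro c; funext k; exact aux_smul_pow_comm (P k) δ c k
  have hsupp : ∀ (c : K) (k : ℕ), (c ^ k • (P k * δ ^ k)).support ⊆ (P k * δ ^ k).support := by
    intro c k g hg
    simp only [HahnSeries.mem_support, HahnSeries.coeff_smul, smul_eq_mul] at hg ⊢
    intro h; exact hg (by rw [h, mul_zero])
  have hconv : ∀ c : K, SummableF fun k => P k * (c • δ) ^ k := by
    intro c
    rw [hcsum c]
    refine ⟨(hδ.1).mono (Set.iUnion_mono fun k => hsupp c k), fun g => (hδ.2 g).subset ?_⟩
    intro k hk
    simp only [Set.mem_setOf_eq, HahnSeries.coeff_smul, smul_eq_mul] at hk ⊢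
    intro h; exact hk (by rw [h, mul_zero])
  have heval : ∀ (c : K) (g : Γ), ∑ᶠ k : ℕ, c ^ k * (P k * δ ^ k).coeff g = 0 := by
    intro c g
    have hle : dLE (c • δ) δ := by
      intro g hg
      refine ⟨g, ?_, le_refl g⟩
      simp only [HahnSeries.mem_support, HahnSeries.coeff_smul, smul_eq_mul] at hg ⊢
      intro h; exact hg (by rw [h, mul_zero])
    have h0 := hzero (c • δ) hle
    rw [evalPS, hsum, dif_pos (hconv c)] at h0
    have h1 := congrArg (fun s => HahnSeries.coeff s g) h0
    simp only [HahnSeries.SummableFamily.coeff_hsum, HahnSeries.coeff_zero] at h1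
    rw [← h1]
    refine finsum_congr fun k => ?_
    have : P k * (c • δ) ^ k = c ^ k • (P k * δ ^ k) := congrFun (hcsum c) k
    show c ^ k * (P k * δ ^ k).coeff g = (P k * (c • δ) ^ k).coeff g
    rw [this, HahnSeries.coeff_smul, smul_eq_mul]
  have key : ∀ k, P k * δ ^ k = 0 := by
    intro k
    ext g
    set a : ℕ → K := fun j => (P j * δ ^ j).coeff g with ha
    set A : Finset ℕ := (hδ.2 g).toFinset with hA
    set p : Polynomial K := ∑ j ∈ A, Polynomial.C (a j) * Polynomial.X ^ j with hp
    have hpe : ∀ c : K, p.eval c = 0 := by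
      intro c
      rw [hp]
      have : (p.eval c) = ∑ j ∈ A, a j * c ^ j := by
        rw [hp]; simp [Polynomial.eval_finset_sum]
      rw [← hp, this, ← heval c g]
      rw [finsum_eq_sum_of_support_subset]
      · exact Finset.sum_congr rfl fun j _ => mul_comm _ _
      · intro j hj
        simp only [Function.mem_support] at hj
        simp only [hA, Set.Finite.coe_toFinset, Set.mem_setOf_eq]
        intro h; exact hj (by rw [ha] at *; simp only [h, mul_zero])
    have hp0 : p = 0 := Polynomial.funext fun c => by rw [hpe c, Polynomial.eval_zero]
    have hcoeff : a k = p.coeff k := by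
      rw [hp, Polynomial.finset_sum_coeff]
      simp only [Polynomial.coeff_C_mul_X_pow]
      rw [Finset.sum_ite_eq A k a]
      by_cases hk : k ∈ A
      · simp [hk]
      · simp only [hk, if_false]
        rw [hA] at hk
        simp only [Set.Finite.mem_toFinset, Set.mem_setOf_eq, not_not] at hk
        exact hk
    have := hcoeff.trans (by rw [hp0, Polynomial.coeff_zero])
    simpa [ha] using this
  intro k
  have := key k
  rcases mul_eq_zero.mp this with h | h
  · exact h
  · exact absurd h (pow_ne_zero k hδ0)

end Art
end
end
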